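/- arXiv:1512.01229 — 7 statements merged into one kernel-verified Lean document; each statement's English description precedes it below -/
import Mathlib

section
/- Let X be an exchangeable sequence of {0,1}-valued random variables and define the generating polynomials Ω_n(z) := Σ_{h=0}^{n} ω_h^(n) z^h over ℂ. Then for every n ≥ 1 and every z ∈ ℂ, n·Ω_{n−1}(z) = n·Ω_n(z) + (1−z)·Ω_n′(z), where Ω_n′ is the derivative of Ω_n. -/
open MeasureTheory ProbabilityTheory Filter

def Exchangeable {Ω : Type*} [MeasurableSpace Ω] (P : Measure Ω) (X : ℕ → Ω → ℕ) : Prop :=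
  ∀ (n : ℕ) (σ : Equiv.Perm (Fin n)),
    P.map (fun ω => fun i : Fin n => X (σ i) ω) =
      P.map (fun ω => fun i : Fin n => X i ω)

/-- `succProb P X n h = ω_h^(n)`, the probability of exactly `h` successes in the
first `n` trials. -/
noncomputable def succProb {Ω : Type*} [MeasurableSpace Ω] (P : Measure Ω)
    (X : ℕ → Ω → ℕ) (n h : ℕ) : ℝ :=
  (P {ω | ∑ i ∈ Finset.range n, X i ω = h}).toReal

/-- The generating polynomial `Ω_n(z) = ∑_{h=0}^n ω_h^(n) z^h`, as a function on `ℂ`. -/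
noncomputable def genPoly {Ω : Type*} [MeasurableSpace Ω] (P : Measure Ω)
    (X : ℕ → Ω → ℕ) (n : ℕ) : ℂ → ℂ :=
  fun z => ∑ h ∈ Finset.range (n + 1), (succProb P X n h : ℂ) * z ^ h

/-!
With `S_n = X_0 + ⋯ + X_{n-1}`, conditioning on the last trial gives
`P(S_m = h) = P(S_{m+1} = h, X_m = 0) + P(S_{m+1} = h + 1, X_m = 1)`. By exchangeability
`P(S_{m+1} = k, X_i = v)` does not depend on `i ≤ m`, so summing over `i` and counting the trials
equal to `v` on `{S_{m+1} = k}` yields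
`(m + 1) ω_h^(m) = (m + 1 - h) ω_h^(m+1) + (h + 1) ω_{h+1}^(m+1)`.
This recurrence is the coefficient of `z^h` in the claimed identity.
-/

open Finset

theorem card_filter_eq_one_eq_sum {ι : Type*} (s : Finset ι) {f : ι → ℕ}
    (hf : ∀ i ∈ s, f i ≤ 1) : #{i ∈ s | f i = 1} = ∑ i ∈ s, f i := by
  rw [card_filter]
  refine sum_congr rfl fun i hi => ?_
  have := hf i hi
  interval_cases f i <;> rfl

theorem card_filter_eq_zero_eq_card_sub_sum {ι : Type*} (s : Finset ι) {f : ι → ℕ}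
    (hf : ∀ i ∈ s, f i ≤ 1) : #{i ∈ s | f i = 0} = #s - ∑ i ∈ s, f i := by
  have hsplit := card_filter_add_card_filter_not (s := s) (fun i => f i = 0)
  have hne : {i ∈ s | ¬f i = 0} = {i ∈ s | f i = 1} :=
    filter_congr fun i hi => by have := hf i hi; omega
  rw [hne, card_filter_eq_one_eq_sum s hf] at hsplit
  omega

theorem sum_measure_inter_eq_mul_of_card_eq {Ω ι : Type*} [MeasurableSpace Ω] (μ : Measure Ω)
    (s : Finset ι) {A : Set Ω} {B : ι → Set Ω} (hA : MeasurableSet A)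
    (hB : ∀ i, MeasurableSet (B i)) [∀ i, DecidablePred (· ∈ B i)] {c : ℕ}
    (hc : ∀ ω ∈ A, #{i ∈ s | ω ∈ B i} = c) :
    ∑ i ∈ s, μ (A ∩ B i) = c * μ A := by
  calc ∑ i ∈ s, μ (A ∩ B i) = ∑ i ∈ s, ∫⁻ ω in A, (B i).indicator 1 ω ∂μ := by
        simp_rw [lintegral_indicator_one (hB _), Measure.restrict_apply (hB _), Set.inter_comm]
    _ = ∫⁻ ω in A, ∑ i ∈ s, (B i).indicator 1 ω ∂μ :=
        (lintegral_finsetSum _ fun i _ => measurable_one.indicator (hB i)).symm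
    _ = ∫⁻ _ in A, (c : ENNReal) ∂μ := setLIntegral_congr_fun hA fun ω hω => by
        simp [Set.indicator_apply, sum_boole, hc ω hω]
    _ = c * μ A := setLIntegral_const A _

theorem measurableSet_setOf_sum_range_eq {Ω : Type*} [MeasurableSpace Ω] {X : ℕ → Ω → ℕ}
    (hXmeas : ∀ k, Measurable (X k)) (n h : ℕ) :
    MeasurableSet {ω | ∑ k ∈ range n, X k ω = h} :=
  (Finset.measurable_sum _ fun k _ => hXmeas k) (measurableSet_singleton h)

theorem setOf_sum_range_eq_union {Ω : Type*} {X : ℕ → Ω → ℕ} {m : ℕ}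
    (hXm : ∀ ω, X m ω ≤ 1) (h : ℕ) :
    {ω | ∑ k ∈ range m, X k ω = h} =
      ({ω | ∑ k ∈ range (m + 1), X k ω = h} ∩ {ω | X m ω = 0}) ∪
        ({ω | ∑ k ∈ range (m + 1), X k ω = h + 1} ∩ {ω | X m ω = 1}) := by
  ext ω
  have := hXm ω
  simp only [Set.mem_ofPred_eq, Set.mem_union, Set.mem_inter_iff, sum_range_succ]
  omega

namespace Exchangeable

variable {Ω : Type*} [MeasurableSpace Ω] {P : Measure Ω} {X : ℕ → Ω → ℕ}

theorem measure_preimage_perm (hX : Exchangeable P X) (hXmeas : ∀ k, Measurable (X k)) {n : ℕ}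
    (σ : Equiv.Perm (Fin n)) (S : Set (Fin n → ℕ)) :
    P ((fun ω (i : Fin n) => X (σ i) ω) ⁻¹' S) =
      P ((fun ω (i : Fin n) => X i ω) ⁻¹' S) := by
  rw [← Measure.map_apply (by fun_prop) .of_discrete,
    ← Measure.map_apply (by fun_prop) .of_discrete, hX n σ]

theorem measure_inter_eq_of_lt (hX : Exchangeable P X) (hXmeas : ∀ k, Measurable (X k))
    {n h v i j : ℕ} (hi : i < n) (hj : j < n) :
    P ({ω | ∑ k ∈ range n, X k ω = h} ∩ {ω | X i ω = v}) =
      P ({ω | ∑ k ∈ range n, X k ω = h} ∩ {ω | X j ω = v}) := by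
  set σ := Equiv.swap (⟨i, hi⟩ : Fin n) ⟨j, hj⟩
  have hsum (ω : Ω) : ∑ k : Fin n, X (σ k) ω = ∑ k ∈ range n, X k ω := by
    rw [Equiv.sum_comp σ (fun k : Fin n => X k ω), Fin.sum_univ_eq_sum_range (X · ω)]
  convert hX.measure_preimage_perm hXmeas σ {w | ∑ k, w k = h ∧ w ⟨j, hj⟩ = v} using 2 <;>
    ext ω
  · simp [hsum, σ]
  · simp [Fin.sum_univ_eq_sum_range (X · ω)]

theorem card_mul_measure_inter_last (hX : Exchangeable P X) (hXmeas : ∀ k, Measurable (X k))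
    {n h v c : ℕ}
    (hc : ∀ ω, ∑ k ∈ range (n + 1), X k ω = h → #{i ∈ range (n + 1) | X i ω = v} = c) :
    (n + 1) * P ({ω | ∑ k ∈ range (n + 1), X k ω = h} ∩ {ω | X n ω = v}) =
      c * P {ω | ∑ k ∈ range (n + 1), X k ω = h} := by
  calc (n + 1) * P ({ω | ∑ k ∈ range (n + 1), X k ω = h} ∩ {ω | X n ω = v})
      = ∑ i ∈ range (n + 1),
          P ({ω | ∑ k ∈ range (n + 1), X k ω = h} ∩ {ω | X i ω = v}) := by
        rw [sum_congr rfl fun i hi => hX.measure_inter_eq_of_lt hXmeas (mem_range.1 hi)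
          n.lt_succ_self, sum_const, card_range, nsmul_eq_mul]
        push_cast; rfl
    _ = c * P {ω | ∑ k ∈ range (n + 1), X k ω = h} :=
        sum_measure_inter_eq_mul_of_card_eq P _ (B := fun i => {ω | X i ω = v})
          (measurableSet_setOf_sum_range_eq hXmeas _ _)
          (fun i => hXmeas i (measurableSet_singleton v)) hc

theorem measure_recurrence (hX : Exchangeable P X) (hX01 : ∀ k ω, X k ω ≤ 1)
    (hXmeas : ∀ k, Measurable (X k)) (m h : ℕ) :
    (m + 1) * P {ω | ∑ k ∈ range m, X k ω = h} =
      (m + 1 - h : ℕ) * P {ω | ∑ k ∈ range (m + 1), X k ω = h} +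
        (h + 1 : ℕ) * P {ω | ∑ k ∈ range (m + 1), X k ω = h + 1} := by
  have hdisj : Disjoint ({ω | ∑ k ∈ range (m + 1), X k ω = h} ∩ {ω | X m ω = 0})
      ({ω | ∑ k ∈ range (m + 1), X k ω = h + 1} ∩ {ω | X m ω = 1}) :=
    Set.disjoint_left.2 fun ω h0 h1 => by simp_all
  have hX01' (ω : Ω) : ∀ k ∈ range (m + 1), X k ω ≤ 1 := fun k _ => hX01 k ω
  have hmeas := (measurableSet_setOf_sum_range_eq hXmeas (m + 1) (h + 1)).inter
    (hXmeas m (measurableSet_singleton 1))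
  rw [setOf_sum_range_eq_union (hX01 m), measure_union hdisj hmeas, mul_add,
    hX.card_mul_measure_inter_last hXmeas fun ω hω => ?zeros,
    hX.card_mul_measure_inter_last hXmeas fun ω hω => ?ones]
  case zeros => rw [card_filter_eq_zero_eq_card_sub_sum _ (hX01' ω), card_range, hω]
  case ones => rw [card_filter_eq_one_eq_sum _ (hX01' ω), hω]

theorem succProb_recurrence [IsFiniteMeasure P] (hX : Exchangeable P X)
    (hX01 : ∀ k ω, X k ω ≤ 1) (hXmeas : ∀ k, Measurable (X k)) {m h : ℕ}
    (hh : h ≤ m + 1) :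
    (m + 1) * succProb P X m h =
      (m + 1 - h) * succProb P X (m + 1) h + (h + 1) * succProb P X (m + 1) (h + 1) := by
  have := congrArg ENNReal.toReal (hX.measure_recurrence hX01 hXmeas m h)
  rw [ENNReal.toReal_add (by finiteness) (by finiteness)] at this
  simp only [ENNReal.toReal_mul, ENNReal.toReal_natCast, Nat.cast_sub hh] at this
  exact_mod_cast this

end Exchangeable

theorem hasDerivAt_sum_range_mul_pow (b : ℕ → ℂ) (N : ℕ) (z : ℂ) :
    HasDerivAt (fun w => ∑ h ∈ range (N + 1), b h * w ^ h)
      (∑ h ∈ range N, (h + 1) * b (h + 1) * z ^ h) z := by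
  simp_rw [sum_range_succ' _ N, pow_zero, mul_one]
  refine (HasDerivAt.fun_sum fun h _ => ?_).add_const (b 0)
  refine ((hasDerivAt_pow (h + 1) z).const_mul (b (h + 1))).congr_deriv ?_
  rw [Nat.add_sub_cancel]
  push_cast
  ring

theorem mul_sum_range_eq_of_recurrence (a b : ℕ → ℂ) (m : ℕ)
    (hab : ∀ h ≤ m, (m + 1) * a h = (m + 1 - h) * b h + (h + 1) * b (h + 1)) (z : ℂ) :
    (m + 1) * ∑ h ∈ range (m + 1), a h * z ^ h =
      (m + 1) * ∑ h ∈ range (m + 2), b h * z ^ h +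
        (1 - z) * ∑ h ∈ range (m + 1), (h + 1) * b (h + 1) * z ^ h := by
  have hshift : z * ∑ h ∈ range (m + 1), (h + 1) * b (h + 1) * z ^ h =
      ∑ h ∈ range (m + 2), h * b h * z ^ h := by
    rw [sum_range_succ' _ (m + 1), mul_sum]
    simp only [Nat.cast_add, Nat.cast_one, CharP.cast_eq_zero, zero_mul, add_zero, pow_succ]
    exact sum_congr rfl fun h _ => by ring
  have hsplit : ∑ h ∈ range (m + 2), (m + 1 - h) * b h * z ^ h =
      (m + 1) * ∑ h ∈ range (m + 2), b h * z ^ h -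
        ∑ h ∈ range (m + 2), h * b h * z ^ h := by
    rw [mul_sum, ← sum_sub_distrib]
    exact sum_congr rfl fun h _ => by ring
  have htop : ∑ h ∈ range (m + 2), (m + 1 - h) * b h * z ^ h =
      ∑ h ∈ range (m + 1), (m + 1 - h) * b h * z ^ h := by
    rw [sum_range_succ]
    push_cast
    ring
  calc (m + 1) * ∑ h ∈ range (m + 1), a h * z ^ h
      = ∑ h ∈ range (m + 1), ((m + 1 - h) * b h + (h + 1) * b (h + 1)) * z ^ h := by
        rw [mul_sum]
        exact sum_congr rfl fun h hh => by
          rw [← mul_assoc, hab h (Nat.lt_succ_iff.1 (mem_range.1 hh))]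
    _ = ∑ h ∈ range (m + 2), (m + 1 - h) * b h * z ^ h +
          ∑ h ∈ range (m + 1), (h + 1) * b (h + 1) * z ^ h := by
        rw [htop, ← sum_add_distrib]
        exact sum_congr rfl fun h _ => by ring
    _ = _ := by linear_combination hsplit + hshift

/-- for an exchangeable sequence of `{0,1}`-valued random variables, for every
`n ≥ 1` and `z ∈ ℂ`, `n Ω_{n-1}(z) = n Ω_n(z) + (1 - z) Ω_n'(z)`. -/
theorem deFinetti_stmt2 {Ω : Type*} [MeasurableSpace Ω] (P : Measure Ω)
    [IsProbabilityMeasure P] (X : ℕ → Ω → ℕ)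
    (hX01 : ∀ k ω, X k ω ≤ 1) (hXmeas : ∀ k, Measurable (X k))
    (hexch : Exchangeable P X) (n : ℕ) (hn : 1 ≤ n) (z : ℂ) :
    (n : ℂ) * genPoly P X (n - 1) z =
      (n : ℂ) * genPoly P X n z + (1 - z) * deriv (genPoly P X n) z := by
  obtain ⟨m, rfl⟩ : ∃ m, n = m + 1 := ⟨n - 1, by omega⟩
  unfold genPoly
  rw [(hasDerivAt_sum_range_mul_pow _ (m + 1) z).deriv, Nat.add_sub_cancel]
  push_cast
  refine mul_sum_range_eq_of_recurrence _ _ m (fun h hh => ?_) z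
  exact_mod_cast hexch.succProb_recurrence hX01 hXmeas (by omega : h ≤ m + 1)
end

section
/- Let X be an exchangeable sequence of {0,1}-valued random variables and define Ω_n(z) := Σ_{h=0}^{n} ω_h^(n) z^h over ℂ. Then for every n ≥ 1 and every z ∈ ℂ, Ω_n(1+z) = Σ_{h=0}^{n} C(n,h) · ω_h^(h) · z^h, where ω_h^(h) = P(X_0 = X_1 = ⋯ = X_{h−1} = 1) is the probability that the first h trials are all successes (and ω_0^(0) := 1). -/
open MeasureTheory ProbabilityTheory Filter

/-- `allOnes P X h = ω_h^(h) = P(X_0 = ⋯ = X_{h-1} = 1)`, the probability that the first `h`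
trials are all successes (with `allOnes P X 0 = 1` since `P` is a probability measure). -/
noncomputable def allOnes {Ω : Type*} [MeasurableSpace Ω] (P : Measure Ω)
    (X : ℕ → Ω → ℕ) (h : ℕ) : ℝ :=
  (P {ω | ∀ i < h, X i ω = 1}).toReal

/-! Write `S = X_0 + ⋯ + X_{n-1}`. Since the `X_i` are `{0,1}`-valued, `C(S, k)` counts the
`k`-subsets of `{0, …, n-1}` on which every trial succeeds. Taking expectations gives
`∑_h C(h, k) ω_h^(n) = ∑_{|s| = k} P(X_i = 1 for all i ∈ s)`, and by exchangeability each of the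
`C(n, k)` summands equals `ω_k^(k)`. Expanding `(1 + z)^h` binomially and comparing the
coefficients of `z^k` gives the identity. -/

open scoped ENNReal
open Finset

theorem Finset.filter_powersetCard_forall {α : Type*} [DecidableEq α] (t : Finset α)
    (p : α → Prop) [DecidablePred p] (k : ℕ) :
    (t.powersetCard k).filter (fun s => ∀ i ∈ s, p i) = (t.filter p).powersetCard k := by
  ext s
  simp only [mem_filter, mem_powersetCard, subset_iff]
  aesop

theorem Finset.sum_eq_card_filter_eq_one {α : Type*} (t : Finset α) {f : α → ℕ}
    (hf : ∀ i, f i ≤ 1) : ∑ i ∈ t, f i = #(t.filter (f · = 1)) := by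
  rw [card_filter]
  refine sum_congr rfl fun i _ => ?_
  rcases Nat.le_one_iff_eq_zero_or_eq_one.mp (hf i) with h | h <;> simp [h]

theorem Fin.card_subtype_val_mem {n : ℕ} {s : Finset ℕ} (hs : s ⊆ range n) :
    Fintype.card {i : Fin n // (i : ℕ) ∈ s} = #s := by
  rw [Fintype.card_subtype, ← card_map Fin.valEmbedding]
  congr 1
  ext m
  simp only [Finset.mem_map, mem_filter, mem_univ, true_and, Fin.valEmbedding_apply]
  exact ⟨by rintro ⟨i, hi, rfl⟩; exact hi, fun hm => ⟨⟨m, mem_range.mp (hs hm)⟩, hm, rfl⟩⟩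

theorem Fin.forall_val_mem_iff {n : ℕ} {s : Finset ℕ} (hs : s ⊆ range n) (p : ℕ → Prop) :
    (∀ i : Fin n, (i : ℕ) ∈ s → p i) ↔ ∀ j ∈ s, p j :=
  ⟨fun h j hj => h ⟨j, mem_range.mp (hs hj)⟩ hj, fun h i hi => h i hi⟩

theorem Fin.exists_perm_val_mem_iff {n : ℕ} {s t : Finset ℕ} (hs : s ⊆ range n)
    (ht : t ⊆ range n) (hst : #s = #t) :
    ∃ σ : Equiv.Perm (Fin n), ∀ i, (σ i : ℕ) ∈ s ↔ (i : ℕ) ∈ t := by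
  have e : {i : Fin n // (i : ℕ) ∈ t} ≃ {i : Fin n // (i : ℕ) ∈ s} :=
    Fintype.equivOfCardEq (by rw [Fin.card_subtype_val_mem hs, Fin.card_subtype_val_mem ht, hst])
  refine ⟨e.extendSubtype, fun i => ⟨fun h => ?_, e.extendSubtype_mem i⟩⟩
  by_contra hi
  exact e.extendSubtype_not_mem i hi h

section

variable {Ω : Type*} [MeasurableSpace Ω] {P : Measure Ω} {X : ℕ → Ω → ℕ}

theorem measurableSet_forall_mem_eq_one (hX : ∀ k, Measurable (X k)) (s : Finset ℕ) :
    MeasurableSet {ω | ∀ i ∈ s, X i ω = 1} := by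
  measurability

theorem Exchangeable.measure_preimage_perm_s3 (hexch : Exchangeable P X)
    (hX : ∀ k, Measurable (X k)) {n : ℕ} (σ : Equiv.Perm (Fin n)) {C : Set (Fin n → ℕ)}
    (hC : MeasurableSet C) :
    P {ω | (fun i : Fin n => X (σ i) ω) ∈ C} = P {ω | (fun i : Fin n => X i ω) ∈ C} := by
  have h := congrArg (· C) (hexch n σ)
  rwa [Measure.map_apply (measurable_pi_lambda _ fun i => hX _) hC,
    Measure.map_apply (measurable_pi_lambda _ fun i => hX _) hC] at h

theorem Exchangeable.measure_forall_mem_eq_one_congr (hexch : Exchangeable P X)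
    (hX : ∀ k, Measurable (X k)) {n : ℕ} {s t : Finset ℕ} (hs : s ⊆ range n)
    (ht : t ⊆ range n) (hst : #s = #t) :
    P {ω | ∀ i ∈ s, X i ω = 1} = P {ω | ∀ i ∈ t, X i ω = 1} := by
  obtain ⟨σ, hσ⟩ := Fin.exists_perm_val_mem_iff hs ht hst
  have hC : MeasurableSet {f : Fin n → ℕ | ∀ i : Fin n, (i : ℕ) ∈ t → f i = 1} := by
    measurability
  have hσs : ∀ ω, (∀ i : Fin n, (i : ℕ) ∈ t → X (σ i) ω = 1) ↔ ∀ j ∈ s, X j ω = 1 := by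
    intro ω
    simp_rw [← hσ]
    exact (σ.forall_congr_right (q := fun i : Fin n => (i : ℕ) ∈ s → X i ω = 1)).trans
      (Fin.forall_val_mem_iff hs (X · ω = 1))
  have ht' : ∀ ω, (∀ i : Fin n, (i : ℕ) ∈ t → X i ω = 1) ↔ ∀ j ∈ t, X j ω = 1 :=
    fun ω => Fin.forall_val_mem_iff ht (X · ω = 1)
  simpa only [Set.mem_ofPred_eq, hσs, ht'] using hexch.measure_preimage_perm_s3 hX σ hC

theorem lintegral_comp_eq_sum_mul_measure {α : Type*} [MeasurableSpace α]
    [MeasurableSingletonClass α] [DecidableEq α] {S : Ω → α} (hS : Measurable S)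
    {t : Finset α} (hSt : ∀ ω, S ω ∈ t) (f : α → ℝ≥0∞) :
    ∫⁻ ω, f (S ω) ∂P = ∑ a ∈ t, f a * P {ω | S ω = a} := by
  have hpt : ∀ ω, f (S ω) = ∑ a ∈ t, {ω | S ω = a}.indicator (fun _ => f a) ω := by
    intro ω
    simp [Set.indicator_apply, hSt ω]
  have hmeas : ∀ a, MeasurableSet {ω | S ω = a} := fun a => hS (measurableSet_singleton a)
  simp_rw [hpt]
  rw [lintegral_finsetSum _ fun a _ => measurable_const.indicator (hmeas a)]
  exact sum_congr rfl fun a _ => lintegral_indicator_const (hmeas a) _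

theorem lintegral_choose_sum_eq_sum_measure_forall_mem_eq_one (hX01 : ∀ k ω, X k ω ≤ 1)
    (hX : ∀ k, Measurable (X k)) (n k : ℕ) :
    ∫⁻ ω, ((∑ i ∈ range n, X i ω).choose k : ℝ≥0∞) ∂P
      = ∑ s ∈ (range n).powersetCard k, P {ω | ∀ i ∈ s, X i ω = 1} := by
  have hpt : ∀ ω, ((∑ i ∈ range n, X i ω).choose k : ℝ≥0∞)
      = ∑ s ∈ (range n).powersetCard k, {ω | ∀ i ∈ s, X i ω = 1}.indicator 1 ω := by
    intro ω
    simp only [Set.indicator_apply, Set.mem_ofPred_eq, Pi.one_apply, sum_boole,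
      filter_powersetCard_forall, card_powersetCard, sum_eq_card_filter_eq_one _ (hX01 · ω)]
  simp_rw [hpt]
  rw [lintegral_finsetSum _ fun s _ =>
    measurable_one.indicator (measurableSet_forall_mem_eq_one hX s)]
  exact sum_congr rfl fun s _ => lintegral_indicator_one (measurableSet_forall_mem_eq_one hX s)

theorem sum_choose_mul_succProb [IsFiniteMeasure P] (hX01 : ∀ k ω, X k ω ≤ 1)
    (hX : ∀ k, Measurable (X k)) (hexch : Exchangeable P X) (n k : ℕ) :
    ∑ h ∈ range (n + 1), (h.choose k : ℝ) * succProb P X n h = n.choose k * allOnes P X k := by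
  have hS : Measurable fun ω => ∑ i ∈ range n, X i ω := Finset.measurable_sum _ fun i _ => hX i
  have hS_mem : ∀ ω, ∑ i ∈ range n, X i ω ∈ range (n + 1) := fun ω => by
    simpa [mem_range, Nat.lt_succ_iff] using
      (sum_le_sum fun i _ => hX01 i ω : ∑ i ∈ range n, X i ω ≤ ∑ i ∈ range n, 1)
  have hexp := (lintegral_comp_eq_sum_mul_measure (P := P) hS hS_mem
    (fun h => (h.choose k : ℝ≥0∞))).symm.trans
      (lintegral_choose_sum_eq_sum_measure_forall_mem_eq_one hX01 hX n k)
  have hterm : ∀ s ∈ (range n).powersetCard k,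
      P {ω | ∀ i ∈ s, X i ω = 1} = P {ω | ∀ i ∈ range k, X i ω = 1} := by
    intro s hs
    obtain ⟨hsn, rfl⟩ := mem_powersetCard.mp hs
    exact hexch.measure_forall_mem_eq_one_congr hX hsn
      (range_subset_range.mpr (by simpa using card_le_card hsn)) (card_range _).symm
  rw [sum_congr rfl hterm, sum_const, card_powersetCard, card_range, nsmul_eq_mul] at hexp
  have := congrArg ENNReal.toReal hexp
  rw [ENNReal.toReal_sum fun h _ => ENNReal.mul_ne_top (ENNReal.natCast_ne_top _)
      (measure_ne_top P _)] at this
  simp only [ENNReal.toReal_mul, ENNReal.toReal_natCast, mem_range] at this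
  exact this

end

theorem sum_mul_one_add_pow {R : Type*} [CommSemiring R] (a : ℕ → R) (z : R) (n : ℕ) :
    ∑ h ∈ range (n + 1), a h * (1 + z) ^ h
      = ∑ k ∈ range (n + 1), (∑ h ∈ range (n + 1), (h.choose k : R) * a h) * z ^ k := by
  have hpow : ∀ h ∈ range (n + 1),
      (1 + z) ^ h = ∑ k ∈ range (n + 1), (h.choose k : R) * z ^ k := by
    intro h hh
    calc (1 + z) ^ h = ∑ k ∈ range (h + 1), (h.choose k : R) * z ^ k := by
          rw [add_comm, add_pow]
          exact sum_congr rfl fun k _ => by ring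
      _ = ∑ k ∈ range (n + 1), (h.choose k : R) * z ^ k :=
          sum_subset (range_subset_range.mpr (mem_range.mp hh)) fun k _ hk => by
            rw [Nat.choose_eq_zero_of_lt (by simpa using hk), Nat.cast_zero, zero_mul]
  rw [sum_congr rfl fun h hh => by rw [hpow h hh, mul_sum]]
  simp_rw [sum_mul]
  rw [sum_comm]
  exact sum_congr rfl fun k _ => sum_congr rfl fun h _ => by ring

theorem deFinetti_stmt3_general {Ω : Type*} [MeasurableSpace Ω] (P : Measure Ω)
    [IsProbabilityMeasure P] (X : ℕ → Ω → ℕ)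
    (hX01 : ∀ k ω, X k ω ≤ 1) (hXmeas : ∀ k, Measurable (X k))
    (hexch : Exchangeable P X) (n : ℕ) (z : ℂ) :
    ∑ h ∈ Finset.range (n + 1), (succProb P X n h : ℂ) * (1 + z) ^ h =
      ∑ h ∈ Finset.range (n + 1), (n.choose h : ℂ) * (allOnes P X h : ℂ) * z ^ h := by
  rw [sum_mul_one_add_pow]
  refine sum_congr rfl fun k _ => congrArg (· * z ^ k) ?_
  exact_mod_cast sum_choose_mul_succProb hX01 hXmeas hexch n k

/-- for an exchangeable sequence of `{0,1}`-valued random variables, for every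
`n ≥ 1` and `z ∈ ℂ`, `Ω_n(1+z) = ∑_{h=0}^n C(n,h) ω_h^(h) z^h`. -/
theorem deFinetti_stmt3 {Ω : Type*} [MeasurableSpace Ω] (P : Measure Ω)
    [IsProbabilityMeasure P] (X : ℕ → Ω → ℕ)
    (hX01 : ∀ k ω, X k ω ≤ 1) (hXmeas : ∀ k, Measurable (X k))
    (hexch : Exchangeable P X) (n : ℕ) (hn : 1 ≤ n) (z : ℂ) :
    ∑ h ∈ Finset.range (n + 1), (succProb P X n h : ℂ) * (1 + z) ^ h =
      ∑ h ∈ Finset.range (n + 1), (n.choose h : ℂ) * (allOnes P X h : ℂ) * z ^ h :=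
  deFinetti_stmt3_general P X hX01 hXmeas hexch n z
end

section
/- (de Finetti representation) Let X be an exchangeable sequence of {0,1}-valued random variables. Then there exists a probability measure μ on the interval [0,1] such that for every n ≥ 1 and 0 ≤ h ≤ n, ω_h^(n) = C(n,h) · ∫₀¹ ξ^h (1−ξ)^{n−h} dμ(ξ). -/
/-!
By exchangeability, the probability of a prescribed success/failure pattern on any `a + b`
distinct trials depends only on its numbers `a` of successes and `b` of failures; call it
`q a b`. Hence `ω_h^(n) = C(n, h) q h (n - h)`, and splitting on one more trial gives
`q a b = q a (b + 1) + q (a + 1) b`. Expanding `(S_N / N) ^ k`, all but a vanishing fraction of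
the `N ^ k` index tuples are injective, so `E[(S_N / N) ^ k] → q k 0`. The laws of `S_N / N` live
on the compact space of probability measures on `[0, 1]`, so a subsequence converges weakly to
some `μ`, whose `k`-th moment is then `q k 0`; the recursion propagates this to
`∫ ξ ^ a (1 - ξ) ^ b dμ = q a b`.
-/

open MeasureTheory ProbabilityTheory Filter

open Finset Function Topology

lemma exists_perm_castLE_eq {m n : ℕ} (hmn : m ≤ n) (g : Fin m ↪ Fin n) :
    ∃ σ : Equiv.Perm (Fin n), ∀ i, σ (Fin.castLE hmn i) = g i := by
  classical
  let e : Set.range (Fin.castLE hmn) ≃ Set.range g :=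
    (Equiv.ofInjective _ (Fin.castLE_injective hmn)).symm.trans (Equiv.ofInjective g g.injective)
  refine ⟨e.extendSubtype, fun i => ?_⟩
  rw [e.extendSubtype_apply_of_mem _ ⟨i, rfl⟩]
  simp only [Equiv.trans_apply, Equiv.ofInjective_symm_apply, Equiv.ofInjective_apply, e]

lemma forall_mem_iff_forall_orderEmbOfFin {α : Type*} [LinearOrder α] (s : Finset α) {k : ℕ}
    (h : #s = k) (p : α → Prop) :
    (∀ i ∈ s, p i) ↔ ∀ j, p (s.orderEmbOfFin h j) := by
  rw [← Set.forall_mem_range, range_orderEmbOfFin]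
  exact Iff.rfl

lemma disjoint_range_Ico (a b : ℕ) : Disjoint (range a) (Ico a b) := by
  rw [range_eq_Ico]
  exact Ico_disjoint_Ico_consecutive _ _ _

lemma card_filter_injective_fin (k N : ℕ) :
    #{f : Fin k → Fin N | Injective f} = N.descFactorial k := by
  rw [← Fintype.card_subtype, Fintype.card_congr (Equiv.subtypeInjectiveEquivEmbedding _ _),
    Fintype.card_embedding_eq, Fintype.card_fin, Fintype.card_fin]

lemma abs_sum_sub_card_mul_le {ι : Type*} [DecidableEq ι] {s t : Finset ι} (hts : t ⊆ s)
    {p : ι → ℝ} {c : ℝ} (hp : ∀ i ∈ s, p i ∈ Set.Icc (0 : ℝ) 1) (hc : c ∈ Set.Icc (0 : ℝ) 1)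
    (hpt : ∀ i ∈ t, p i = c) :
    |∑ i ∈ s, p i - #s * c| ≤ #s - #t := by
  have hsub : ∑ i ∈ s, p i - #s * c = ∑ i ∈ s \ t, (p i - c) := by
    rw [← add_zero (∑ i ∈ s \ t, (p i - c)), ← sum_eq_zero fun i hi => sub_eq_zero.2 (hpt i hi),
      sum_sdiff hts, sum_sub_distrib, sum_const, nsmul_eq_mul]
  calc |∑ i ∈ s, p i - #s * c| ≤ ∑ i ∈ s \ t, |p i - c| := hsub ▸ abs_sum_le_sum_abs _ _
    _ ≤ ∑ i ∈ s \ t, 1 := sum_le_sum fun i hi => by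
        have := hp i (sdiff_subset hi)
        rw [abs_le]
        constructor <;> linarith [hc.1, hc.2, this.1, this.2]
    _ = #s - #t := by
        rw [sum_const, card_sdiff_of_subset hts, nsmul_one, Nat.cast_sub (card_le_card hts)]

lemma tendsto_descFactorial_div_pow (k : ℕ) :
    Tendsto (fun N : ℕ => (N.descFactorial k : ℝ) / N ^ k) atTop (𝓝 1) := by
  have hprod : ∀ᶠ N : ℕ in atTop,
      ∏ i ∈ range k, (1 - (i : ℝ) / N) = (N.descFactorial k : ℝ) / N ^ k := by
    filter_upwards [eventually_ge_atTop (max k 1)] with N hN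
    have hN : (N : ℝ) ≠ 0 := by norm_cast; omega
    rw [Nat.descFactorial_eq_prod_range, Nat.cast_prod, ← card_range k, ← prod_const,
      card_range, ← prod_div_distrib]
    refine prod_congr rfl fun i hi => ?_
    rw [mem_range] at hi
    rw [Nat.cast_sub (by omega), sub_div, div_self hN]
  refine Tendsto.congr' hprod ?_
  simpa using tendsto_finsetProd (range k) fun i _ =>
    (tendsto_const_div_atTop_nhds_zero_nat (i : ℝ)).const_sub 1

lemma integral_pow_mul_one_sub_pow {ν : Measure unitInterval} [IsFiniteMeasure ν]
    {q : ℕ → ℕ → ℝ} (hq : ∀ a b, q a b = q a (b + 1) + q (a + 1) b)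
    (hmom : ∀ a, ∫ x, (x : ℝ) ^ a ∂ν = q a 0) (a b : ℕ) :
    ∫ x, (x : ℝ) ^ a * (1 - x) ^ b ∂ν = q a b := by
  induction b generalizing a with
  | zero => simpa using hmom a
  | succ b ih =>
    have hint (a : ℕ) : Integrable (fun x : unitInterval => (x : ℝ) ^ a * (1 - x) ^ b) ν :=
      (by fun_prop : Continuous _).integrable_of_hasCompactSupport (.of_compactSpace _)
    have hsplit (x : unitInterval) : (x : ℝ) ^ a * (1 - x) ^ (b + 1) =
        (x : ℝ) ^ a * (1 - x) ^ b - (x : ℝ) ^ (a + 1) * (1 - x) ^ b := by ring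
    simp_rw [hsplit]
    rw [integral_sub (hint a) (hint (a + 1)), ih, ih, hq a b]
    ring

section Trials

variable {Ω : Type*} {X : ℕ → Ω → ℕ}

def patternSet (X : ℕ → Ω → ℕ) (A B : Finset ℕ) : Set Ω :=
  {ω | (∀ i ∈ A, X i ω = 1) ∧ ∀ i ∈ B, X i ω = 0}

lemma patternSet_eq_setOf_append (X : ℕ → Ω → ℕ) {A B : Finset ℕ} {a b : ℕ} (hA : #A = a)
    (hB : #B = b) :
    patternSet X A B = {ω | (fun i => X (Fin.append (A.orderEmbOfFin hA) (B.orderEmbOfFin hB) i) ω)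
      ∈ ({Fin.append (fun _ => 1) (fun _ => 0)} : Set (Fin (a + b) → ℕ))} := by
  ext ω
  simp only [patternSet, Set.mem_singleton_iff, funext_iff, Fin.forall_fin_add,
    Fin.append_left, Fin.append_right, forall_mem_iff_forall_orderEmbOfFin A hA,
    forall_mem_iff_forall_orderEmbOfFin B hB]

lemma sum_eq_card_filter_eq_one (hX01 : ∀ k ω, X k ω ≤ 1) (s : Finset ℕ) (ω : Ω) :
    ∑ i ∈ s, X i ω = #{i ∈ s | X i ω = 1} := by
  rw [card_filter]
  refine sum_congr rfl fun i _ => ?_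
  rcases Nat.le_one_iff_eq_zero_or_eq_one.1 (hX01 i ω) with h | h <;> simp [h]

lemma mem_patternSet_sdiff_iff (hX01 : ∀ k ω, X k ω ≤ 1) {n : ℕ} {s : Finset ℕ}
    (hs : s ⊆ range n) (ω : Ω) :
    ω ∈ patternSet X s (range n \ s) ↔ {i ∈ range n | X i ω = 1} = s := by
  constructor
  · rintro ⟨h₁, h₀⟩
    ext i
    by_cases hi : i ∈ s
    · simp [hi, hs hi, h₁ i hi]
    · simp only [mem_filter, hi, iff_false, not_and]
      intro hin
      have := h₀ i (mem_sdiff.2 ⟨hin, hi⟩)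
      omega
  · rintro rfl
    refine ⟨fun i hi => (mem_filter.1 hi).2, fun i hi => ?_⟩
    simp only [Finset.mem_sdiff, mem_filter, not_and] at hi
    have := hX01 i ω
    have := hi.2 hi.1
    omega

lemma prod_cast_eq_indicator (hX01 : ∀ k ω, X k ω ≤ 1) {k : ℕ} (f : Fin k → ℕ) (ω : Ω) :
    ∏ j, (X (f j) ω : ℝ) = {ω | ∀ j, X (f j) ω = 1}.indicator 1 ω := by
  have hcast (j : Fin k) : (X (f j) ω : ℝ) = if X (f j) ω = 1 then 1 else 0 := by
    rcases Nat.le_one_iff_eq_zero_or_eq_one.1 (hX01 (f j) ω) with h | h <;> simp [h]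
  simp only [hcast, Fintype.prod_boole, Set.indicator_apply, Set.mem_ofPred_eq, Pi.one_apply]
  congr

noncomputable def empiricalFreq (X : ℕ → Ω → ℕ) (N : ℕ) (ω : Ω) : unitInterval :=
  Set.projIcc 0 1 zero_le_one ((∑ i ∈ range N, (X i ω : ℝ)) / N)

lemma coe_empiricalFreq (hX01 : ∀ k ω, X k ω ≤ 1) (N : ℕ) (ω : Ω) :
    (empiricalFreq X N ω : ℝ) = (∑ i ∈ range N, (X i ω : ℝ)) / N := by
  have hsum : ∑ i ∈ range N, (X i ω : ℝ) ≤ N := by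
    simpa using sum_le_sum fun i (_ : i ∈ range N) => (Nat.cast_le (α := ℝ)).2 (hX01 i ω)
  rw [empiricalFreq, Set.projIcc_of_mem _ ⟨by positivity, div_le_one_of_le₀ hsum N.cast_nonneg⟩]

variable [MeasurableSpace Ω] {P : Measure Ω}

noncomputable def patternProb (P : Measure Ω) (X : ℕ → Ω → ℕ) (a b : ℕ) : ℝ :=
  P.real (patternSet X (range a) (Ico a (a + b)))

lemma measurableSet_patternSet (hXmeas : ∀ k, Measurable (X k)) (A B : Finset ℕ) :
    MeasurableSet (patternSet X A B) := by
  unfold patternSet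
  measurability

lemma measurable_empiricalFreq (hXmeas : ∀ k, Measurable (X k)) (N : ℕ) :
    Measurable (empiricalFreq X N) :=
  continuous_projIcc.measurable.comp (by measurability)

lemma integral_sum_pow [IsFiniteMeasure P] (hX01 : ∀ k ω, X k ω ≤ 1)
    (hXmeas : ∀ k, Measurable (X k)) (N k : ℕ) :
    ∫ ω, (∑ i : Fin N, (X i ω : ℝ)) ^ k ∂P =
      ∑ f : Fin k → Fin N, P.real {ω | ∀ j, X (f j) ω = 1} := by
  have hS (f : Fin k → Fin N) : MeasurableSet {ω | ∀ j, X (f j) ω = 1} := by measurability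
  simp only [Fintype.sum_pow, prod_cast_eq_indicator hX01]
  rw [integral_finsetSum _ fun f _ => (integrable_const 1).indicator (hS f)]
  exact sum_congr rfl fun f _ => integral_indicator_one (hS f)

namespace Exchangeable

lemma measure_reindex_eq (hexch : Exchangeable P X) (hXmeas : ∀ k, Measurable (X k))
    {m : ℕ} {g : Fin m → ℕ} (hg : Injective g) (S : Set (Fin m → ℕ)) :
    P {ω | (fun i => X (g i) ω) ∈ S} = P {ω | (fun i : Fin m => X i ω) ∈ S} := by
  set n := max m (univ.sup g + 1)
  have hmn : m ≤ n := le_max_left _ _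
  have hgn (i : Fin m) : g i < n :=
    (Nat.lt_succ_of_le (le_sup (mem_univ i))).trans_le (le_max_right _ _)
  obtain ⟨σ, hσ⟩ := exists_perm_castLE_eq hmn
    ⟨fun i => ⟨g i, hgn i⟩, fun i j hij => hg (congrArg Fin.val hij)⟩
  let S' : Set (Fin n → ℕ) := {u | (fun i => u (Fin.castLE hmn i)) ∈ S}
  have hmeas (τ : Fin n → ℕ) : Measurable fun ω (j : Fin n) => X (τ j) ω :=
    measurable_pi_lambda _ fun j => hXmeas _
  have hlaw := congrArg (· S') (hexch n σ)
  simp only [Measure.map_apply (hmeas _) MeasurableSet.of_discrete] at hlaw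
  convert hlaw using 2
  · ext ω
    simp only [Set.mem_preimage, Set.mem_ofPred_eq, hσ, S']
    rfl
  · ext ω
    simp [S']

lemma measure_patternSet_eq (hexch : Exchangeable P X) (hXmeas : ∀ k, Measurable (X k))
    {A B A' B' : Finset ℕ} (hAB : Disjoint A B) (hAB' : Disjoint A' B') (hA : #A = #A')
    (hB : #B = #B') :
    P (patternSet X A B) = P (patternSet X A' B') := by
  have hinj {A B : Finset ℕ} {a b : ℕ} (hAB : Disjoint A B) (hA : #A = a) (hB : #B = b) :
      Injective (Fin.append (A.orderEmbOfFin hA) (B.orderEmbOfFin hB)) :=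
    Fin.append_injective_iff.2 ⟨(A.orderEmbOfFin hA).injective, (B.orderEmbOfFin hB).injective,
      fun i j => disjoint_iff_ne.1 hAB _ (orderEmbOfFin_mem _ _ i) _ (orderEmbOfFin_mem _ _ j)⟩
  rw [patternSet_eq_setOf_append X hA rfl, patternSet_eq_setOf_append X rfl hB.symm,
    hexch.measure_reindex_eq hXmeas (hinj hAB hA rfl),
    hexch.measure_reindex_eq hXmeas (hinj hAB' rfl hB.symm)]

lemma measureReal_patternSet (hexch : Exchangeable P X) (hXmeas : ∀ k, Measurable (X k))
    {A B : Finset ℕ} (hAB : Disjoint A B) :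
    P.real (patternSet X A B) = patternProb P X #A #B := by
  rw [patternProb, measureReal_def, measureReal_def,
    hexch.measure_patternSet_eq hXmeas hAB (disjoint_range_Ico _ _)] <;> simp

/-- Split on the outcome of trial `a + b`. -/
lemma patternProb_eq_add [IsFiniteMeasure P] (hexch : Exchangeable P X)
    (hX01 : ∀ k ω, X k ω ≤ 1) (hXmeas : ∀ k, Measurable (X k)) (a b : ℕ) :
    patternProb P X a b = patternProb P X a (b + 1) + patternProb P X (a + 1) b := by
  have hsplit : patternSet X (range a) (Ico a (a + b)) =
      patternSet X (range a) (insert (a + b) (Ico a (a + b))) ∪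
        patternSet X (insert (a + b) (range a)) (Ico a (a + b)) := by
    ext ω
    rcases Nat.le_one_iff_eq_zero_or_eq_one.1 (hX01 (a + b) ω) with h | h <;>
      simp only [patternSet, Set.mem_union, Set.mem_ofPred_eq, forall_mem_insert, h] <;> simp
  have hdisj : Disjoint (patternSet X (range a) (insert (a + b) (Ico a (a + b))))
      (patternSet X (insert (a + b) (range a)) (Ico a (a + b))) :=
    Set.disjoint_left.2 fun ω h₀ h₁ => by simp_all [patternSet]
  rw [patternProb, hsplit, measureReal_union hdisj (measurableSet_patternSet hXmeas _ _),
    hexch.measureReal_patternSet hXmeas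
      (disjoint_insert_right.2 ⟨by simp, disjoint_range_Ico _ _⟩),
    hexch.measureReal_patternSet hXmeas
      (disjoint_insert_left.2 ⟨by simp, disjoint_range_Ico _ _⟩)]
  simp [add_assoc]

/-- The `C(n, h)` arrangements of `h` successes among `n` trials are equally likely. -/
lemma succProb_eq (hexch : Exchangeable P X) [IsFiniteMeasure P]
    (hX01 : ∀ k ω, X k ω ≤ 1) (hXmeas : ∀ k, Measurable (X k)) (n h : ℕ) :
    succProb P X n h = n.choose h * patternProb P X h (n - h) := by
  have hunion : {ω | ∑ i ∈ range n, X i ω = h} =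
      ⋃ s ∈ powersetCard h (range n), patternSet X s (range n \ s) := by
    ext ω
    simp only [Set.mem_iUnion, Set.mem_ofPred_eq, sum_eq_card_filter_eq_one hX01]
    constructor
    · intro hω
      exact ⟨_, mem_powersetCard.2 ⟨filter_subset _ _, hω⟩,
        (mem_patternSet_sdiff_iff hX01 (filter_subset _ _) ω).2 rfl⟩
    · rintro ⟨s, hs, hω⟩
      rw [mem_powersetCard] at hs
      rw [(mem_patternSet_sdiff_iff hX01 hs.1 ω).1 hω, hs.2]
  have hdisj : (powersetCard h (range n) : Set (Finset ℕ)).PairwiseDisjoint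
      fun s => patternSet X s (range n \ s) := by
    intro s hs t ht hst
    rw [mem_coe, mem_powersetCard] at hs ht
    refine Set.disjoint_left.2 fun ω hωs hωt => hst ?_
    rw [← (mem_patternSet_sdiff_iff hX01 hs.1 ω).1 hωs,
      (mem_patternSet_sdiff_iff hX01 ht.1 ω).1 hωt]
  rw [succProb, ← measureReal_def, hunion,
    measureReal_biUnion_finset hdisj fun s _ => measurableSet_patternSet hXmeas _ _,
    sum_congr rfl fun s hs => ?_, sum_const, card_powersetCard, card_range, nsmul_eq_mul]
  rw [mem_powersetCard] at hs
  rw [hexch.measureReal_patternSet hXmeas disjoint_sdiff, card_sdiff_of_subset hs.1, card_range,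
    hs.2]

lemma measureReal_forall_eq_one (hexch : Exchangeable P X)
    (hXmeas : ∀ k, Measurable (X k)) {k : ℕ} {f : Fin k → ℕ} (hf : Injective f) :
    P.real {ω | ∀ j, X (f j) ω = 1} = patternProb P X k 0 := by
  have hset : {ω | ∀ j, X (f j) ω = 1} = patternSet X (univ.image f) ∅ := by
    ext ω
    simp [patternSet]
  rw [hset, hexch.measureReal_patternSet hXmeas (disjoint_empty_right _),
    card_image_of_injective _ hf, card_univ, Fintype.card_fin, card_empty]

lemma tendsto_integral_empiricalFreq_pow [IsProbabilityMeasure P]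
    (hexch : Exchangeable P X) (hX01 : ∀ k ω, X k ω ≤ 1) (hXmeas : ∀ k, Measurable (X k))
    (k : ℕ) :
    Tendsto (fun N => ∫ ω, (empiricalFreq X N ω : ℝ) ^ k ∂P) atTop
      (𝓝 (patternProb P X k 0)) := by
  set q := patternProb P X k 0
  have hq : q ∈ Set.Icc (0 : ℝ) 1 := ⟨measureReal_nonneg, measureReal_le_one⟩
  have hbound : ∀ᶠ N : ℕ in atTop,
      |∫ ω, (empiricalFreq X N ω : ℝ) ^ k ∂P - q| ≤ 1 - (N.descFactorial k : ℝ) / N ^ k := by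
    filter_upwards [eventually_ge_atTop 1] with N hN
    have hNk : (0 : ℝ) < (N : ℝ) ^ k := by positivity
    have hcount := abs_sum_sub_card_mul_le
      (filter_subset (fun f : Fin k → Fin N => Injective f) univ)
      (p := fun f => P.real {ω | ∀ j, X (f j) ω = 1}) (c := q)
      (fun f _ => ⟨measureReal_nonneg, measureReal_le_one⟩) hq
      (fun f hf => hexch.measureReal_forall_eq_one hXmeas
        (Fin.val_injective.comp (mem_filter.1 hf).2))
    rw [card_filter_injective_fin, card_univ, Fintype.card_fun, Fintype.card_fin,
      Fintype.card_fin] at hcount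
    simp_rw [coe_empiricalFreq hX01, div_pow, integral_div, ← Fin.sum_univ_eq_sum_range,
      integral_sum_pow hX01 hXmeas]
    rw [div_sub' hNk.ne', abs_div, abs_of_pos hNk, div_le_iff₀ hNk, sub_mul, one_mul,
      div_mul_cancel₀ _ hNk.ne']
    push_cast at hcount
    linarith
  refine tendsto_iff_dist_tendsto_zero.2
    (squeeze_zero' (Eventually.of_forall fun _ => dist_nonneg) hbound ?_)
  simpa using (tendsto_descFactorial_div_pow k).const_sub 1

lemma exists_probabilityMeasure_moments [IsProbabilityMeasure P]
    (hexch : Exchangeable P X) (hX01 : ∀ k ω, X k ω ≤ 1) (hXmeas : ∀ k, Measurable (X k)) :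
    ∃ ν : ProbabilityMeasure unitInterval,
      ∀ k, ∫ x, (x : ℝ) ^ k ∂(ν : Measure unitInterval) = patternProb P X k 0 := by
  let law (N : ℕ) : ProbabilityMeasure unitInterval :=
    ProbabilityMeasure.map ⟨P, inferInstance⟩ (measurable_empiricalFreq hXmeas N).aemeasurable
  obtain ⟨ν, φ, hφ, hlim⟩ := CompactSpace.tendsto_subseq law
  refine ⟨ν, fun k => tendsto_nhds_unique
    (((ProbabilityMeasure.continuous_integral_continuousMap
      (⟨fun x => (x : ℝ) ^ k, by fun_prop⟩ : C(unitInterval, ℝ))).tendsto ν).comp hlim) ?_⟩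
  have hmoment (N : ℕ) : ∫ x, (x : ℝ) ^ k ∂(law N : Measure unitInterval) =
      ∫ ω, (empiricalFreq X N ω : ℝ) ^ k ∂P := by
    rw [show (law N : Measure unitInterval) = P.map (empiricalFreq X N) from
      ProbabilityMeasure.toMeasure_map _ _,
      integral_map (measurable_empiricalFreq hXmeas N).aemeasurable (by fun_prop)]
  simpa [Function.comp_def, hmoment] using
    (hexch.tendsto_integral_empiricalFreq_pow hX01 hXmeas k).comp hφ.tendsto_atTop

end Exchangeable

end Trials

/-- de Finetti representation: for an exchangeable sequence of `{0,1}`-valued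
random variables there is a probability measure `μ` on `[0,1]` such that
`ω_h^(n) = C(n,h) ∫₀¹ ξ^h (1-ξ)^{n-h} dμ(ξ)` for all `n ≥ 1`, `h ≤ n`. -/
theorem deFinetti_stmt6 {Ω : Type*} [MeasurableSpace Ω] (P : Measure Ω)
    [IsProbabilityMeasure P] (X : ℕ → Ω → ℕ)
    (hX01 : ∀ k ω, X k ω ≤ 1) (hXmeas : ∀ k, Measurable (X k))
    (hexch : Exchangeable P X) :
    ∃ μ : Measure ℝ, IsProbabilityMeasure μ ∧ μ (Set.Icc (0:ℝ) 1)ᶜ = 0 ∧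
      ∀ n h : ℕ, 1 ≤ n → h ≤ n →
        succProb P X n h =
          (n.choose h : ℝ) * ∫ ξ in Set.Icc (0:ℝ) 1, ξ ^ h * (1 - ξ) ^ (n - h) ∂μ := by
  obtain ⟨ν, hmom⟩ := hexch.exists_probabilityMeasure_moments hX01 hXmeas
  have hval : MeasurableEmbedding ((↑) : unitInterval → ℝ) := .subtype_coe measurableSet_Icc
  set μ : Measure ℝ := (ν : Measure unitInterval).map (↑)
  have hsupp : μ (Set.Icc 0 1)ᶜ = 0 := by
    rw [hval.map_apply]
    simp
  have hrestrict : μ.restrict (Set.Icc 0 1) = μ :=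
    Measure.restrict_eq_self_of_ae_mem (mem_ae_iff.2 hsupp)
  refine ⟨μ, Measure.isProbabilityMeasure_map hval.measurable.aemeasurable, hsupp,
    fun n h _ _ => ?_⟩
  rw [hexch.succProb_eq hX01 hXmeas, hrestrict, hval.integral_map,
    integral_pow_mul_one_sub_pow (hexch.patternProb_eq_add hX01 hXmeas) hmom]
end

section
/- (Theorem I) Let X be an exchangeable sequence of {0,1}-valued random variables with de Finetti measure μ. Let 0 ≤ ξ₁ < ξ₂ ≤ 1 with μ({ξ₁}) = μ({ξ₂}) = 0. Then the probability that the frequency over n trials lies between ξ₁ and ξ₂ converges: P(ξ₁ ≤ (X_0 + ⋯ + X_{n−1})/n ≤ ξ₂) → μ([ξ₁, ξ₂]) as n → ∞. -/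
open MeasureTheory ProbabilityTheory Filter

/-- A probability measure `μ` on `[0,1]` is a de Finetti measure for the sequence `X` if
`ω_h^(n) = C(n,h) ∫₀¹ ξ^h (1-ξ)^{n-h} dμ(ξ)` for all `1 ≤ n` and `h ≤ n`. -/
def IsDeFinettiMeasure {Ω : Type*} [MeasurableSpace Ω] (P : Measure Ω)
    (X : ℕ → Ω → ℕ) (μ : Measure ℝ) : Prop :=
  IsProbabilityMeasure μ ∧ μ (Set.Icc (0:ℝ) 1)ᶜ = 0 ∧
    ∀ n h : ℕ, 1 ≤ n → h ≤ n →
      succProb P X n h =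
        (n.choose h : ℝ) * ∫ ξ in Set.Icc (0:ℝ) 1, ξ ^ h * (1 - ξ) ^ (n - h) ∂μ

/-!
By the de Finetti representation, `P(S_n / n ∈ A) = ∫ B_n(A, ξ) dμ(ξ)`, where `B_n(A, ξ)` is the
probability that the success frequency of `n` Bernoulli trials with parameter `ξ` lies in `A`.
Chebyshev's inequality, i.e. the variance identity for Bernstein polynomials, gives
`B_n(A, ξ) → 1_A(ξ)` at every `ξ ∉ ∂A`. Since `∂[ξ₁, ξ₂] ⊆ {ξ₁, ξ₂}` is `μ`-null, dominated
convergence yields the limit `μ [ξ₁, ξ₂]`.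
-/

open Finset Topology

section Bernstein

variable {n : ℕ} {ξ : ℝ}

lemma bernsteinPolynomial_eval_nonneg (hξ : ξ ∈ Set.Icc (0 : ℝ) 1) (n ν : ℕ) :
    0 ≤ (bernsteinPolynomial ℝ n ν).eval ξ := by
  obtain ⟨hξ0, hξ1⟩ := hξ
  have : 0 ≤ 1 - ξ := sub_nonneg.2 hξ1
  simp only [bernsteinPolynomial, Polynomial.eval_mul, Polynomial.eval_pow, Polynomial.eval_sub,
    Polynomial.eval_one, Polynomial.eval_X, Polynomial.eval_natCast]
  positivity

lemma sum_bernsteinPolynomial_eval (n : ℕ) (ξ : ℝ) :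
    ∑ ν ∈ range (n + 1), (bernsteinPolynomial ℝ n ν).eval ξ = 1 := by
  simpa [Polynomial.eval_finsetSum] using congrArg (Polynomial.eval ξ) (bernsteinPolynomial.sum ℝ n)

lemma sum_sq_sub_mul_bernsteinPolynomial_eval (hn : n ≠ 0) (ξ : ℝ) :
    ∑ ν ∈ range (n + 1), (ξ - ν / n) ^ 2 * (bernsteinPolynomial ℝ n ν).eval ξ
      = ξ * (1 - ξ) / n := by
  have hvar := congrArg (Polynomial.eval ξ) (bernsteinPolynomial.variance ℝ n)
  simp only [Polynomial.eval_finsetSum, Polynomial.eval_mul, Polynomial.eval_pow,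
    Polynomial.eval_sub, Polynomial.eval_natCast, Polynomial.eval_X,
    Polynomial.eval_one, nsmul_eq_mul] at hvar
  have hn' : (n : ℝ) ≠ 0 := Nat.cast_ne_zero.2 hn
  have hterm : ∀ ν : ℕ, (ξ - ν / n) ^ 2 = (n * ξ - ν) ^ 2 / n ^ 2 := fun ν => by
    field_simp
  simp only [hterm, div_mul_eq_mul_div, ← sum_div, hvar]
  field_simp

/-- Chebyshev's inequality for the binomial distribution. -/
lemma sq_mul_sum_bernsteinPolynomial_eval_le (hn : n ≠ 0) (hξ : ξ ∈ Set.Icc (0 : ℝ) 1)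
    {s : Finset ℕ} (hs : s ⊆ range (n + 1)) {δ : ℝ} (hδ : 0 ≤ δ)
    (hfar : ∀ ν ∈ s, δ ≤ |ξ - ν / n|) :
    δ ^ 2 * ∑ ν ∈ s, (bernsteinPolynomial ℝ n ν).eval ξ ≤ ξ * (1 - ξ) / n :=
  calc δ ^ 2 * ∑ ν ∈ s, (bernsteinPolynomial ℝ n ν).eval ξ
      ≤ ∑ ν ∈ s, (ξ - ν / n) ^ 2 * (bernsteinPolynomial ℝ n ν).eval ξ := by
        rw [mul_sum]
        refine sum_le_sum fun ν hν => ?_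
        refine mul_le_mul_of_nonneg_right ?_ (bernsteinPolynomial_eval_nonneg hξ n ν)
        exact (pow_le_pow_left₀ hδ (hfar ν hν) 2).trans_eq (sq_abs _)
    _ ≤ ∑ ν ∈ range (n + 1), (ξ - ν / n) ^ 2 * (bernsteinPolynomial ℝ n ν).eval ξ :=
        sum_le_sum_of_subset_of_nonneg hs fun ν _ _ =>
          mul_nonneg (sq_nonneg _) (bernsteinPolynomial_eval_nonneg hξ n ν)
    _ = ξ * (1 - ξ) / n := sum_sq_sub_mul_bernsteinPolynomial_eval hn ξ

end Bernstein

lemma frontier_Icc_subset {α : Type*} [LinearOrder α] [TopologicalSpace α] [OrderTopology α]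
    (a b : α) : frontier (Set.Icc a b) ⊆ {a, b} := by
  rintro x ⟨hx, hxi⟩
  rw [isClosed_Icc.closure_eq] at hx
  rw [← Set.Icc_sdiff_Ioo_same (hx.1.trans hx.2)]
  exact ⟨hx, fun hx' => hxi (isOpen_Ioo.subset_interior_iff.2 Set.Ioo_subset_Icc_self hx')⟩

section BinomialFrequency

variable {n : ℕ} {A : Set ℝ} {ξ : ℝ}

open Classical in
/-- The probability that the frequency of successes in `n` independent trials with success
probability `ξ` lies in `A`. -/
noncomputable def binomialFreqProb (n : ℕ) (A : Set ℝ) (ξ : ℝ) : ℝ :=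
  ∑ ν ∈ (range (n + 1)).filter (fun ν : ℕ => (ν : ℝ) / n ∈ A), (bernsteinPolynomial ℝ n ν).eval ξ

lemma binomialFreqProb_nonneg (hξ : ξ ∈ Set.Icc (0 : ℝ) 1) : 0 ≤ binomialFreqProb n A ξ :=
  sum_nonneg fun ν _ => bernsteinPolynomial_eval_nonneg hξ n ν

open Classical in
lemma binomialFreqProb_add_compl (n : ℕ) (A : Set ℝ) (ξ : ℝ) :
    binomialFreqProb n A ξ + binomialFreqProb n Aᶜ ξ = 1 := by
  rw [← sum_bernsteinPolynomial_eval n ξ,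
    ← sum_filter_add_sum_filter_not (range (n + 1)) (fun ν : ℕ => (ν : ℝ) / n ∈ A)]
  unfold binomialFreqProb
  congr

lemma binomialFreqProb_le_one (hξ : ξ ∈ Set.Icc (0 : ℝ) 1) : binomialFreqProb n A ξ ≤ 1 := by
  linarith [binomialFreqProb_add_compl n A ξ, binomialFreqProb_nonneg (n := n) (A := Aᶜ) hξ]

lemma continuous_binomialFreqProb (n : ℕ) (A : Set ℝ) : Continuous (binomialFreqProb n A) :=
  continuous_finsetSum _ fun ν _ => (bernsteinPolynomial ℝ n ν).continuous

open Classical in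
lemma binomialFreqProb_le_of_forall_le_dist (hn : n ≠ 0) (hξ : ξ ∈ Set.Icc (0 : ℝ) 1)
    {δ : ℝ} (hδ : 0 < δ) (hfar : ∀ x ∈ A, δ ≤ dist ξ x) :
    binomialFreqProb n A ξ ≤ ξ * (1 - ξ) / δ ^ 2 / n := by
  have hcheb := sq_mul_sum_bernsteinPolynomial_eval_le hn hξ (filter_subset _ _) hδ.le
    fun ν hν => Real.dist_eq ξ _ ▸ hfar _ (mem_filter.1 hν).2
  rw [div_right_comm, le_div_iff₀ (by positivity), mul_comm]
  exact hcheb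

lemma tendsto_binomialFreqProb_of_notMem_closure (hξ : ξ ∈ Set.Icc (0 : ℝ) 1)
    (hA : ξ ∉ closure A) : Tendsto (fun n => binomialFreqProb n A ξ) atTop (𝓝 0) := by
  obtain ⟨δ, hδ, hfar⟩ : ∃ δ > 0, ∀ x ∈ A, δ ≤ dist ξ x := by
    simpa [Metric.mem_closure_iff] using hA
  refine tendsto_of_tendsto_of_tendsto_of_le_of_le' tendsto_const_nhds
    (tendsto_const_div_atTop_nhds_zero_nat (ξ * (1 - ξ) / δ ^ 2))
    (Eventually.of_forall fun n => binomialFreqProb_nonneg hξ) ?_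
  filter_upwards [eventually_ne_atTop 0] with n hn
  exact binomialFreqProb_le_of_forall_le_dist hn hξ hδ hfar

lemma tendsto_binomialFreqProb_of_mem_interior (hξ : ξ ∈ Set.Icc (0 : ℝ) 1)
    (hA : ξ ∈ interior A) : Tendsto (fun n => binomialFreqProb n A ξ) atTop (𝓝 1) := by
  have hcompl := tendsto_binomialFreqProb_of_notMem_closure (A := Aᶜ) hξ
    (by rwa [closure_compl, Set.notMem_compl_iff])
  simpa [eq_sub_of_add_eq (binomialFreqProb_add_compl _ A ξ)]
    using tendsto_const_nhds.sub hcompl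

lemma tendsto_binomialFreqProb_indicator (hξ : ξ ∈ Set.Icc (0 : ℝ) 1) (hA : ξ ∉ frontier A) :
    Tendsto (fun n => binomialFreqProb n A ξ) atTop (𝓝 (A.indicator 1 ξ)) := by
  by_cases hξA : ξ ∈ A
  · rw [Set.indicator_of_mem hξA]
    exact tendsto_binomialFreqProb_of_mem_interior hξ (by_contra fun h => hA ⟨subset_closure hξA, h⟩)
  · rw [Set.indicator_of_notMem hξA]
    exact tendsto_binomialFreqProb_of_notMem_closure hξ
      fun h => hA ⟨h, fun hi => hξA (interior_subset hi)⟩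

lemma tendsto_integral_binomialFreqProb {μ : Measure ℝ} [IsFiniteMeasure μ]
    (hμ : ∀ᵐ ξ ∂μ, ξ ∈ Set.Icc (0 : ℝ) 1) (hA : MeasurableSet A) (hfr : μ (frontier A) = 0) :
    Tendsto (fun n => ∫ ξ, binomialFreqProb n A ξ ∂μ) atTop (𝓝 (μ.real A)) := by
  rw [← integral_indicator_one hA]
  refine tendsto_integral_of_dominated_convergence (fun _ => 1)
    (fun n => (continuous_binomialFreqProb n A).aestronglyMeasurable) (integrable_const 1)
    (fun n => hμ.mono fun ξ hξ => ?_) ?_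
  · rw [Real.norm_eq_abs, abs_le]
    exact ⟨by linarith [binomialFreqProb_nonneg (n := n) (A := A) hξ], binomialFreqProb_le_one hξ⟩
  · filter_upwards [hμ, measure_eq_zero_iff_ae_notMem.1 hfr] with ξ hξ hξA
    exact tendsto_binomialFreqProb_indicator hξ hξA

end BinomialFrequency

open Classical in
lemma measureReal_freq_mem_eq_sum_succProb {Ω : Type*} [MeasurableSpace Ω] (P : Measure Ω)
    [IsFiniteMeasure P] {X : ℕ → Ω → ℕ} (hX01 : ∀ k ω, X k ω ≤ 1)
    (hXmeas : ∀ k, Measurable (X k)) (n : ℕ) (A : Set ℝ) :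
    P.real {ω | (∑ i ∈ range n, X i ω : ℝ) / n ∈ A}
      = ∑ h ∈ (range (n + 1)).filter (fun h : ℕ => (h : ℝ) / n ∈ A), succProb P X n h := by
  set S : Ω → ℕ := fun ω => ∑ i ∈ range n, X i ω
  have hS : Measurable S := Finset.measurable_sum _ fun i _ => hXmeas i
  have hset : {ω | (∑ i ∈ range n, X i ω : ℝ) / n ∈ A}
      = S ⁻¹' ↑((range (n + 1)).filter (fun h : ℕ => (h : ℝ) / n ∈ A)) := by
    ext ω
    have hSn : ∑ i ∈ range n, X i ω ≤ n := by
      simpa using sum_le_card_nsmul (range n) (fun i => X i ω) 1 fun i _ => hX01 i ω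
    simp [S, hSn]
  rw [hset, measureReal_def, ← sum_measure_preimage_singleton _
    fun h _ => hS (measurableSet_singleton h), ENNReal.toReal_sum fun h _ => measure_ne_top P _]
  rfl

namespace IsDeFinettiMeasure

variable {Ω : Type*} [MeasurableSpace Ω] {P : Measure Ω} {X : ℕ → Ω → ℕ} {μ : Measure ℝ}

lemma ae_mem_Icc (hμ : IsDeFinettiMeasure P X μ) : ∀ᵐ ξ ∂μ, ξ ∈ Set.Icc (0 : ℝ) 1 :=
  ae_iff.2 hμ.2.1

lemma integrable_polynomial_eval (hμ : IsDeFinettiMeasure P X μ) (p : Polynomial ℝ) :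
    Integrable (fun ξ => p.eval ξ) μ := by
  have := hμ.1
  rw [← Measure.restrict_eq_self_of_ae_mem hμ.ae_mem_Icc]
  exact p.continuous.integrableOn_Icc

lemma succProb_eq_integral (hμ : IsDeFinettiMeasure P X μ) {n h : ℕ} (hn : n ≠ 0) (hh : h ≤ n) :
    succProb P X n h = ∫ ξ, (bernsteinPolynomial ℝ n h).eval ξ ∂μ := by
  rw [hμ.2.2 n h (Nat.one_le_iff_ne_zero.2 hn) hh,
    Measure.restrict_eq_self_of_ae_mem hμ.ae_mem_Icc, ← integral_const_mul]
  simp [bernsteinPolynomial, mul_assoc]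

open Classical in
lemma sum_succProb_eq_integral (hμ : IsDeFinettiMeasure P X μ) {n : ℕ} (hn : n ≠ 0)
    (A : Set ℝ) :
    ∑ h ∈ (range (n + 1)).filter (fun h : ℕ => (h : ℝ) / n ∈ A), succProb P X n h
      = ∫ ξ, binomialFreqProb n A ξ ∂μ := by
  unfold binomialFreqProb
  rw [integral_finsetSum _ fun h _ => hμ.integrable_polynomial_eval _]
  exact sum_congr rfl fun h hh =>
    hμ.succProb_eq_integral hn (Nat.lt_succ_iff.1 (mem_range.1 (mem_filter.1 hh).1))

end IsDeFinettiMeasure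

theorem deFinetti_stmt7_general {Ω : Type*} [MeasurableSpace Ω] (P : Measure Ω)
    [IsProbabilityMeasure P] (X : ℕ → Ω → ℕ)
    (hX01 : ∀ k ω, X k ω ≤ 1) (hXmeas : ∀ k, Measurable (X k))
    (μ : Measure ℝ) (hμ : IsDeFinettiMeasure P X μ)
    (ξ₁ ξ₂ : ℝ)
    (hμ₁ : μ {ξ₁} = 0) (hμ₂ : μ {ξ₂} = 0) :
    Tendsto
      (fun n : ℕ =>
        (P {ω | ξ₁ ≤ (∑ i ∈ Finset.range n, X i ω : ℝ) / n ∧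
                (∑ i ∈ Finset.range n, X i ω : ℝ) / n ≤ ξ₂}).toReal)
      atTop (nhds (μ (Set.Icc ξ₁ ξ₂)).toReal) := by
  have := hμ.1
  have hfr : μ (frontier (Set.Icc ξ₁ ξ₂)) = 0 :=
    measure_mono_null (frontier_Icc_subset ξ₁ ξ₂) (measure_union_null hμ₁ hμ₂)
  refine (tendsto_integral_binomialFreqProb hμ.ae_mem_Icc measurableSet_Icc hfr).congr' ?_
  filter_upwards [eventually_ne_atTop 0] with n hn
  exact ((measureReal_freq_mem_eq_sum_succProb P hX01 hXmeas n _).trans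
    (hμ.sum_succProb_eq_integral hn _)).symm

/-- Theorem I: if `μ({ξ₁}) = μ({ξ₂}) = 0`, then
`P(ξ₁ ≤ (X_0 + ⋯ + X_{n-1})/n ≤ ξ₂) → μ([ξ₁, ξ₂])` as `n → ∞`. -/
theorem deFinetti_stmt7 {Ω : Type*} [MeasurableSpace Ω] (P : Measure Ω)
    [IsProbabilityMeasure P] (X : ℕ → Ω → ℕ)
    (hX01 : ∀ k ω, X k ω ≤ 1) (hXmeas : ∀ k, Measurable (X k))
    (hexch : Exchangeable P X) (μ : Measure ℝ) (hμ : IsDeFinettiMeasure P X μ)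
    (ξ₁ ξ₂ : ℝ) (h0 : 0 ≤ ξ₁) (h12 : ξ₁ < ξ₂) (h1 : ξ₂ ≤ 1)
    (hμ₁ : μ {ξ₁} = 0) (hμ₂ : μ {ξ₂} = 0) :
    Tendsto
      (fun n : ℕ =>
        (P {ω | ξ₁ ≤ (∑ i ∈ Finset.range n, X i ω : ℝ) / n ∧
                (∑ i ∈ Finset.range n, X i ω : ℝ) / n ≤ ξ₂}).toReal)
      atTop (nhds (μ (Set.Icc ξ₁ ξ₂)).toReal) :=
  deFinetti_stmt7_general P X hX01 hXmeas μ hμ ξ₁ ξ₂ hμ₁ hμ₂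
end

section
/- Let X be an exchangeable sequence of {0,1}-valued random variables. Then for every fixed m ≥ 1, the m-th moment of the frequency converges to the probability that m trials are all successes: E[((X_0 + ⋯ + X_{n−1})/n)^m] → ω_m^(m) as n → ∞, where ω_m^(m) = P(X_0 = ⋯ = X_{m−1} = 1). -/
open MeasureTheory ProbabilityTheory Filter

open Finset

/-!
Expanding the power, `E[(S_n/n)^m] = n⁻ᵐ ∑_p P(X_{p 0} = ⋯ = X_{p (m-1)} = 1)` over all maps
`p : Fin m → Fin n`, since a product of `{0,1}`-valued variables is the indicator of the event that
all of them equal `1`. By exchangeability every injective `p` contributes exactly `ω_m^(m)`, and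
the `n ^ m - n.descFactorial m` remaining terms change the average by at most
`1 - n.descFactorial m / n ^ m`, which tends to `0`.
-/

theorem tendsto_descFactorial_div_pow_s9 (m : ℕ) :
    Tendsto (fun n : ℕ => (n.descFactorial m : ℝ) / n ^ m) atTop (nhds 1) :=
  (Asymptotics.isEquivalent_iff_tendsto_one
    ((eventually_ne_atTop 0).mono fun n hn => by positivity)).mp (isEquivalent_descFactorial m)

theorem card_filter_injective_fin_s9 (m n : ℕ) :
    #{p : Fin m → Fin n | Function.Injective p} = n.descFactorial m := by
  classical
  rw [← Fintype.card_subtype, Fintype.card_congr (Equiv.subtypeInjectiveEquivEmbedding _ _)]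
  simp [Fintype.card_embedding_eq]

theorem abs_sum_sub_card_mul_le_s9 {α : Type*} [Fintype α] (f : α → ℝ) (c : ℝ) (s : Finset α)
    (hs : ∀ a ∈ s, f a = c) (hf : ∀ a, |f a - c| ≤ 1) :
    |∑ a, f a - Fintype.card α * c| ≤ Fintype.card α - #s := by
  classical
  calc |∑ a, f a - Fintype.card α * c|
      = |∑ a, (f a - c)| := by simp [sum_sub_distrib]
    _ = |∑ a ∈ sᶜ, (f a - c)| := by
        rw [← sum_compl_add_sum s, sum_eq_zero fun a ha => sub_eq_zero.2 (hs a ha), add_zero]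
    _ ≤ ∑ a ∈ sᶜ, |f a - c| := abs_sum_le_sum_abs _ _
    _ ≤ #sᶜ := by simpa using sum_le_card_nsmul sᶜ _ 1 fun a _ => hf a
    _ = Fintype.card α - #s := by rw [card_compl, Nat.cast_sub (card_le_univ s)]

theorem prod_natCast_eq_indicator {Ω ι : Type*} [Fintype ι] (Y : ι → Ω → ℕ)
    (hY01 : ∀ i ω, Y i ω ≤ 1) (ω : Ω) :
    ∏ i, (Y i ω : ℝ) = {ω | ∀ i, Y i ω = 1}.indicator 1 ω := by
  have hboole : ∀ i, (Y i ω : ℝ) = if Y i ω = 1 then 1 else 0 := fun i => by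
    have := hY01 i ω
    interval_cases Y i ω <;> simp
  simp only [hboole, Fintype.prod_boole, Set.indicator_apply, Set.mem_ofPred_eq, Pi.one_apply]

theorem integral_sum_div_pow_eq {Ω : Type*} [MeasurableSpace Ω] (P : Measure Ω)
    [IsFiniteMeasure P] (X : ℕ → Ω → ℕ) (hX01 : ∀ k ω, X k ω ≤ 1)
    (hX : ∀ k, Measurable (X k)) (m n : ℕ) :
    ∫ ω, ((∑ i ∈ range n, X i ω : ℝ) / n) ^ m ∂P =
      (∑ p : Fin m → Fin n, P.real {ω | ∀ j, X (p j) ω = 1}) / n ^ m := by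
  have hexpand : ∀ ω, ((∑ i ∈ range n, X i ω : ℝ) / n) ^ m =
      (∑ p : Fin m → Fin n, ∏ j, (X (p j) ω : ℝ)) / n ^ m := fun ω => by
    rw [div_pow, ← Fin.sum_univ_eq_sum_range, sum_pow', Fintype.piFinset_univ]
  have hset : ∀ p : Fin m → Fin n, MeasurableSet {ω | ∀ j, X (p j) ω = 1} := by
    measurability
  simp only [hexpand, prod_natCast_eq_indicator _ fun j => hX01 _]
  rw [integral_div, integral_finsetSum]
  · simp only [integral_indicator_one (hset _)]
  · exact fun p _ => (integrable_const (1 : ℝ)).indicator (hset p)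

namespace Exchangeable

variable {Ω : Type*} [MeasurableSpace Ω] {P : Measure Ω} {X : ℕ → Ω → ℕ}

theorem map_comp_injective (hexch : Exchangeable P X) (hX : ∀ k, Measurable (X k)) {m n : ℕ}
    {p : Fin m → Fin n} (hp : Function.Injective p) :
    P.map (fun ω (j : Fin m) => X (p j) ω) = P.map (fun ω (j : Fin m) => X j ω) := by
  have hmn : m ≤ n := by simpa using Fintype.card_le_of_injective p hp
  obtain ⟨σ, hσ⟩ :=
    Equiv.Perm.exists_extending_pair (Fin.castLE hmn) p (Fin.castLE_injective hmn) hp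
  have hrestrict : Measurable fun (v : Fin n → ℕ) (j : Fin m) => v (Fin.castLE hmn j) := by
    fun_prop
  have hvec : ∀ τ : Fin n → ℕ, Measurable fun ω (i : Fin n) => X (τ i) ω :=
    fun τ => measurable_pi_lambda _ fun i => hX _
  calc P.map (fun ω (j : Fin m) => X (p j) ω)
      = (P.map fun ω (i : Fin n) => X (σ i) ω).map fun v j => v (Fin.castLE hmn j) := by
        rw [Measure.map_map hrestrict (hvec _)]
        simp [Function.comp_def, hσ]
    _ = (P.map fun ω (i : Fin n) => X i ω).map fun v j => v (Fin.castLE hmn j) := by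
        rw [hexch n σ]
    _ = P.map (fun ω (j : Fin m) => X j ω) := by
        rw [Measure.map_map hrestrict (hvec _)]
        rfl

theorem measureReal_comp_injective_eq_allOnes (hexch : Exchangeable P X)
    (hX : ∀ k, Measurable (X k)) {m n : ℕ} {p : Fin m → Fin n} (hp : Function.Injective p) :
    P.real {ω | ∀ j, X (p j) ω = 1} = allOnes P X m := by
  have hvec : ∀ q : Fin m → ℕ, Measurable fun ω (j : Fin m) => X (q j) ω :=
    fun q => measurable_pi_lambda _ fun j => hX _
  have hpre : ∀ q : Fin m → ℕ,
      {ω | ∀ j, X (q j) ω = 1} = (fun ω (j : Fin m) => X (q j) ω) ⁻¹' {1} := fun q => by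
    ext ω; simp [funext_iff]
  have hinit : {ω | ∀ i < m, X i ω = 1} = {ω | ∀ j : Fin m, X j ω = 1} := by
    ext ω; simp [Fin.forall_iff]
  rw [measureReal_def, allOnes, hinit, hpre, hpre, ← Measure.map_apply (hvec _) (measurableSet_singleton _),
    ← Measure.map_apply (hvec _) (measurableSet_singleton _), hexch.map_comp_injective hX hp]

theorem abs_integral_sum_div_pow_sub_allOnes_le [IsProbabilityMeasure P]
    (hexch : Exchangeable P X) (hX01 : ∀ k ω, X k ω ≤ 1) (hX : ∀ k, Measurable (X k))
    (m : ℕ) {n : ℕ} (hn : n ≠ 0) :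
    |∫ ω, ((∑ i ∈ range n, X i ω : ℝ) / n) ^ m ∂P - allOnes P X m| ≤
      1 - n.descFactorial m / n ^ m := by
  classical
  have hpow : (0 : ℝ) < n ^ m := by positivity
  have hsum := abs_sum_sub_card_mul_le_s9 (fun p : Fin m → Fin n => P.real {ω | ∀ j, X (p j) ω = 1})
    (allOnes P X m) {p | Function.Injective p}
    (fun p hp => hexch.measureReal_comp_injective_eq_allOnes hX (mem_filter.1 hp).2)
    (fun p => abs_sub_le_of_nonneg_of_le measureReal_nonneg measureReal_le_one
      ENNReal.toReal_nonneg measureReal_le_one)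
  simp only [Fintype.card_fun, Fintype.card_fin, card_filter_injective_fin_s9, Nat.cast_pow] at hsum
  rw [integral_sum_div_pow_eq P X hX01 hX, div_sub' hpow.ne', abs_div, abs_of_pos hpow,
    div_le_iff₀ hpow, sub_mul, one_mul, div_mul_cancel₀ _ hpow.ne']
  exact hsum

end Exchangeable

theorem deFinetti_stmt9_general {Ω : Type*} [MeasurableSpace Ω] (P : Measure Ω)
    [IsProbabilityMeasure P] (X : ℕ → Ω → ℕ)
    (hX01 : ∀ k ω, X k ω ≤ 1) (hXmeas : ∀ k, Measurable (X k))
    (hexch : Exchangeable P X) (m : ℕ) :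
    Tendsto
      (fun n : ℕ => ∫ ω, ((∑ i ∈ Finset.range n, X i ω : ℝ) / n) ^ m ∂P)
      atTop (nhds (allOnes P X m)) := by
  rw [tendsto_iff_norm_sub_tendsto_zero]
  refine squeeze_zero' (.of_forall fun n => norm_nonneg _) ?_
    (by simpa using (tendsto_const_nhds (x := (1 : ℝ))).sub (tendsto_descFactorial_div_pow_s9 m))
  filter_upwards [eventually_ne_atTop 0] with n hn
  exact hexch.abs_integral_sum_div_pow_sub_allOnes_le hX01 hXmeas m hn

/-- for every fixed `m ≥ 1`, the `m`-th moment of the frequency converges to the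
probability that `m` trials are all successes:
`E[((X_0 + ⋯ + X_{n-1})/n)^m] → ω_m^(m)` as `n → ∞`. -/
theorem deFinetti_stmt9 {Ω : Type*} [MeasurableSpace Ω] (P : Measure Ω)
    [IsProbabilityMeasure P] (X : ℕ → Ω → ℕ)
    (hX01 : ∀ k ω, X k ω ≤ 1) (hXmeas : ∀ k, Measurable (X k))
    (hexch : Exchangeable P X) (m : ℕ) (hm : 1 ≤ m) :
    Tendsto
      (fun n : ℕ => ∫ ω, ((∑ i ∈ Finset.range n, X i ω : ℝ) / n) ^ m ∂P)
      atTop (nhds (allOnes P X m)) :=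
  deFinetti_stmt9_general P X hX01 hXmeas hexch m
end

section
/- Let X be an exchangeable sequence of {0,1}-valued random variables and let p ∈ [0,1]. If P(X_0 = ⋯ = X_{h−1} = 1) = p^h for every h ≥ 1, then for every n ≥ 1 and 0 ≤ h ≤ n, ω_h^(n) = C(n,h) p^h (1−p)^{n−h}; that is, the number of successes in n trials has the binomial distribution with parameters n and p. -/
/-!
Let `S_n(ω) = {i < n | X_i(ω) = 1}`. Exchangeability makes `P(S_n = s)` depend only on `#s`
(a permutation of the first `n` coordinates carries any success pattern to any other of the same
size), so `P(#S_n = h) = C(n,h) · P(S_n = {0,…,h-1})`. Splitting on the value of `X_n` gives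
`P(S_n = s) = P(S_{n+1} = s) + P(S_{n+1} = s ∪ {n})`, and the second term again only depends on
`#s + 1`. Hence `P(S_{h+m} = {0,…,h-1}) = p^h (1-p)^m` follows by induction on the number `m` of
failures, starting from the hypothesis `P(S_h = {0,…,h-1}) = p^h`.
-/

open MeasureTheory ProbabilityTheory Filter

open Finset

section

variable {Ω : Type*} {X : ℕ → Ω → ℕ} {n : ℕ} {s t : Finset ℕ}

def successSet (X : ℕ → Ω → ℕ) (n : ℕ) (ω : Ω) : Finset ℕ :=
  (range n).filter fun i => X i ω = 1

lemma successSet_subset_range (ω : Ω) : successSet X n ω ⊆ range n :=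
  filter_subset _ _

lemma successSet_add_one (ω : Ω) :
    successSet X (n + 1) ω =
      if X n ω = 1 then insert n (successSet X n ω) else successSet X n ω := by
  rw [successSet, range_add_one, filter_insert]
  rfl

lemma sum_eq_card_successSet (hX01 : ∀ k ω, X k ω ≤ 1) (ω : Ω) :
    ∑ i ∈ range n, X i ω = #(successSet X n ω) := by
  rw [successSet, card_filter]
  refine sum_congr rfl fun i _ => ?_
  have := hX01 i ω
  split_ifs <;> omega

lemma successSet_eq_iff (hs : s ⊆ range n) (ω : Ω) :
    successSet X n ω = s ↔ ∀ i : Fin n, X i ω = 1 ↔ (i : ℕ) ∈ s := by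
  constructor
  · rintro rfl i
    simp [successSet]
  · intro h
    ext i
    by_cases hi : i < n
    · simpa [successSet, hi] using h ⟨i, hi⟩
    · simp only [successSet, mem_filter, mem_range, hi, false_and, false_iff]
      exact fun his => hi (mem_range.1 (hs his))

lemma preimage_successSet_eq_preimage_add_one (hn : n ∉ s) :
    successSet X n ⁻¹' {s} = successSet X (n + 1) ⁻¹' ↑({s, insert n s} : Finset (Finset ℕ)) := by
  ext ω
  have hnω : n ∉ successSet X n ω := fun h => notMem_range_self (successSet_subset_range ω h)
  simp only [Set.mem_preimage, Set.mem_singleton_iff, coe_pair, Set.mem_insert_iff,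
    successSet_add_one]
  split_ifs
  · have hne : insert n (successSet X n ω) ≠ s := fun h => hn (h ▸ mem_insert_self n _)
    have hinj : insert n (successSet X n ω) = insert n s ↔ successSet X n ω = s :=
      ⟨fun h => by rw [← erase_insert hnω, h, erase_insert hn], congrArg _⟩
    rw [hinj]
    tauto
  · have hne : successSet X n ω ≠ insert n s := fun h => hnω (h ▸ mem_insert_self n s)
    tauto

lemma exists_perm_fin_mem_iff (hs : s ⊆ range n) (ht : t ⊆ range n) (hst : #s = #t) :
    ∃ σ : Equiv.Perm (Fin n), ∀ i, (σ i : ℕ) ∈ t ↔ (i : ℕ) ∈ s := by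
  have hs' : ∀ m ∈ s, m < n := fun m hm => mem_range.1 (hs hm)
  have ht' : ∀ m ∈ t, m < n := fun m hm => mem_range.1 (ht hm)
  have := Set.powersetCard.isPretransitive (α := Fin n) (n := #s)
  obtain ⟨σ, hσ⟩ := MulAction.exists_smul_eq (Equiv.Perm (Fin n))
    (⟨s.attachFin hs', card_attachFin s hs'⟩ : Set.powersetCard (Fin n) #s)
    ⟨t.attachFin ht', by rw [Set.powersetCard.mem_iff, card_attachFin, hst]⟩
  refine ⟨σ, fun i => ?_⟩
  have := congrArg (fun u : Set.powersetCard (Fin n) #s => σ i ∈ (u : Finset (Fin n))) hσ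
  simpa [← Equiv.Perm.smul_def, Finset.smul_mem_smul_finset_iff, mem_attachFin] using this.symm

lemma preimage_successSet_eq (hs : s ⊆ range n) :
    successSet X n ⁻¹' {s} =
      (fun ω (i : Fin n) => X i ω) ⁻¹' {f | ∀ i, f i = 1 ↔ (i : ℕ) ∈ s} := by
  ext ω
  exact successSet_eq_iff hs ω

variable [MeasurableSpace Ω] {P : Measure Ω}

lemma measurableSet_preimage_successSet (hX : ∀ k, Measurable (X k)) (hs : s ⊆ range n) :
    MeasurableSet (successSet X n ⁻¹' {s}) := by
  rw [preimage_successSet_eq hs]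
  exact measurableSet_preimage (measurable_pi_lambda _ fun i => hX i)
    (Set.to_countable _).measurableSet

lemma Exchangeable.measure_preimage_comp_perm (hexch : Exchangeable P X)
    (hX : ∀ k, Measurable (X k)) (σ : Equiv.Perm (Fin n)) (B : Set (Fin n → ℕ)) :
    P ((fun ω i => X (σ i) ω) ⁻¹' B) = P ((fun ω (i : Fin n) => X i ω) ⁻¹' B) := by
  have hB := (Set.to_countable B).measurableSet
  rw [← Measure.map_apply (measurable_pi_lambda _ fun i => hX _) hB, hexch n σ,
    Measure.map_apply (measurable_pi_lambda _ fun i => hX _) hB]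

lemma Exchangeable.measure_preimage_successSet_eq (hexch : Exchangeable P X)
    (hX : ∀ k, Measurable (X k)) (hs : s ⊆ range n) (ht : t ⊆ range n) (hst : #s = #t) :
    P (successSet X n ⁻¹' {s}) = P (successSet X n ⁻¹' {t}) := by
  obtain ⟨σ, hσ⟩ := exists_perm_fin_mem_iff hs ht hst
  have ht' : successSet X n ⁻¹' {t} =
      (fun ω i => X (σ i) ω) ⁻¹' {f | ∀ i, f i = 1 ↔ (i : ℕ) ∈ s} := by
    ext ω
    simp only [Set.mem_preimage, Set.mem_singleton_iff, successSet_eq_iff ht, Set.mem_ofPred_eq,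
      ← hσ]
    exact σ.forall_congr_right.symm
  rw [preimage_successSet_eq hs, ht', hexch.measure_preimage_comp_perm hX]

lemma measureReal_preimage_successSet_eq_add [IsFiniteMeasure P] (hX : ∀ k, Measurable (X k))
    (hs : s ⊆ range n) :
    P.real (successSet X n ⁻¹' {s}) =
      P.real (successSet X (n + 1) ⁻¹' {s}) + P.real (successSet X (n + 1) ⁻¹' {insert n s}) := by
  have hn : n ∉ s := fun h => notMem_range_self (hs h)
  have hs' : insert n s ⊆ range (n + 1) := by
    rw [range_add_one]
    exact insert_subset_insert n hs
  have hmeas : ∀ u ∈ ({s, insert n s} : Finset (Finset ℕ)),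
      MeasurableSet (successSet X (n + 1) ⁻¹' {u}) := by
    simp only [mem_insert, mem_singleton, forall_eq_or_imp, forall_eq]
    exact ⟨measurableSet_preimage_successSet hX ((subset_insert n s).trans hs'),
      measurableSet_preimage_successSet hX hs'⟩
  rw [preimage_successSet_eq_preimage_add_one hn, ← sum_measureReal_preimage_singleton _ hmeas,
    sum_pair (insert_ne_self.2 hn).symm]

variable [IsProbabilityMeasure P] {p : ℝ}

lemma measureReal_preimage_successSet_range
    (hiter : ∀ h : ℕ, 1 ≤ h → (P {ω | ∀ i < h, X i ω = 1}).toReal = p ^ h) (n : ℕ) :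
    P.real (successSet X n ⁻¹' {range n}) = p ^ n := by
  have : successSet X n ⁻¹' {range n} = {ω | ∀ i < n, X i ω = 1} := by
    ext ω
    simp [successSet, filter_eq_self]
  rw [this]
  rcases n with _ | n
  · simp
  · exact hiter _ n.succ_pos

lemma measureReal_preimage_successSet (hX : ∀ k, Measurable (X k)) (hexch : Exchangeable P X)
    (hiter : ∀ h : ℕ, 1 ≤ h → (P {ω | ∀ i < h, X i ω = 1}).toReal = p ^ h) :
    ∀ (m n : ℕ) (s : Finset ℕ), s ⊆ range n → #s + m = n →
      P.real (successSet X n ⁻¹' {s}) = p ^ #s * (1 - p) ^ m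
  | 0, n, s, hs, hsn => by
    obtain rfl : s = range n := eq_of_subset_of_card_le hs (by simp [← hsn])
    simpa using measureReal_preimage_successSet_range hiter n
  | m + 1, _, s, hs, rfl => by
    set k := #s
    have hk : range k ⊆ range (k + m) := range_subset_range.2 (by omega)
    have hk' : insert (k + m) (range k) ⊆ range (k + m + 1) := by
      rw [range_add_one]
      exact insert_subset_insert _ hk
    have hswap : P.real (successSet X (k + m + 1) ⁻¹' {s}) =
        P.real (successSet X (k + m + 1) ⁻¹' {range k}) :=
      congrArg ENNReal.toReal <| hexch.measure_preimage_successSet_eq hX hs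
        ((subset_insert _ _).trans hk') (card_range k).symm
    have hsplit := measureReal_preimage_successSet_eq_add (P := P) hX hk
    have h1 := measureReal_preimage_successSet hX hexch hiter m _ _ hk (by simp)
    have hcard : #(insert (k + m) (range k)) = k + 1 := by
      rw [card_insert_of_notMem (by simp), card_range]
    have h2 := measureReal_preimage_successSet hX hexch hiter m _ _ hk' (by omega)
    rw [card_range] at h1
    rw [hcard] at h2
    rw [← add_assoc, hswap]
    linear_combination h1 - h2 - hsplit

end

theorem deFinetti_stmt10_general {Ω : Type*} [MeasurableSpace Ω] (P : Measure Ω)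
    [IsProbabilityMeasure P] (X : ℕ → Ω → ℕ)
    (hX01 : ∀ k ω, X k ω ≤ 1) (hXmeas : ∀ k, Measurable (X k))
    (hexch : Exchangeable P X) (p : ℝ)
    (hiter : ∀ h : ℕ, 1 ≤ h → (P {ω | ∀ i < h, X i ω = 1}).toReal = p ^ h) :
    ∀ n h : ℕ, 1 ≤ n → h ≤ n →
      succProb P X n h = (n.choose h : ℝ) * p ^ h * (1 - p) ^ (n - h) := by
  intro n h _ hh
  have hevent : {ω | ∑ i ∈ range n, X i ω = h} =
      successSet X n ⁻¹' ↑(powersetCard h (range n)) := by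
    ext ω
    simp [sum_eq_card_successSet hX01, mem_powersetCard, successSet_subset_range]
  have hmeas : ∀ s ∈ powersetCard h (range n), MeasurableSet (successSet X n ⁻¹' {s}) :=
    fun s hs => measurableSet_preimage_successSet hXmeas (mem_powersetCard.1 hs).1
  calc succProb P X n h = ∑ s ∈ powersetCard h (range n), P.real (successSet X n ⁻¹' {s}) := by
        rw [succProb, hevent, sum_measureReal_preimage_singleton _ hmeas]
        rfl
    _ = ∑ s ∈ powersetCard h (range n), p ^ h * (1 - p) ^ (n - h) := by
        refine sum_congr rfl fun s hs => ?_
        obtain ⟨hsub, rfl⟩ := mem_powersetCard.1 hs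
        exact measureReal_preimage_successSet hXmeas hexch hiter _ _ _ hsub (by omega)
    _ = (n.choose h : ℝ) * p ^ h * (1 - p) ^ (n - h) := by
        rw [sum_const, card_powersetCard, card_range, nsmul_eq_mul, mul_assoc]

/-- if `P(X_0 = ⋯ = X_{h-1} = 1) = p^h` for every `h ≥ 1`, then the number of
successes in `n` trials is binomial: `ω_h^(n) = C(n,h) p^h (1-p)^{n-h}`. -/
theorem deFinetti_stmt10 {Ω : Type*} [MeasurableSpace Ω] (P : Measure Ω)
    [IsProbabilityMeasure P] (X : ℕ → Ω → ℕ)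
    (hX01 : ∀ k ω, X k ω ≤ 1) (hXmeas : ∀ k, Measurable (X k))
    (hexch : Exchangeable P X) (p : ℝ) (hp0 : 0 ≤ p) (hp1 : p ≤ 1)
    (hiter : ∀ h : ℕ, 1 ≤ h → (P {ω | ∀ i < h, X i ω = 1}).toReal = p ^ h) :
    ∀ n h : ℕ, 1 ≤ n → h ≤ n →
      succProb P X n h = (n.choose h : ℝ) * p ^ h * (1 - p) ^ (n - h) :=
  deFinetti_stmt10_general P X hX01 hXmeas hexch p hiter
end

section
/- (Asymptotic concentration of the posterior) Let μ be a probability measure on [0,1], let r, s be natural numbers not both zero, and set f := r/(r+s). Assume that μ charges every neighborhood of f, i.e. μ((f−ε, f+ε) ∩ [0,1]) > 0 for all ε > 0. Then for every continuous function g : [0,1] → ℝ, the ratio (∫₀¹ g(ξ) ξ^{n r} (1−ξ)^{n s} dμ(ξ)) / (∫₀¹ ξ^{n r} (1−ξ)^{n s} dμ(ξ)) converges to g(f) as n → ∞; that is, the probability measures proportional to ξ^{n r}(1−ξ)^{n s} dμ converge weakly to the Dirac measure at f. -/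
/-!
Laplace's method. The weight `ξ^{nr}(1-ξ)^{ns}` is `φ(ξ)^n` for `φ(ξ) = ξ^r(1-ξ)^s`, which by
weighted AM-GM has a strict maximum on `[0,1]` at `f = r/(r+s)`. Outside an open neighbourhood `U`
of `f`, compactness gives `φ ≤ m` for some `m < φ f`; choosing `θ` strictly between `m` and `φ f`,
we have `φ > θ` on a neighbourhood of `f`, which has positive `μ`-mass. Hence the normalized weight
outside `U` is `O((m/θ)^n) → 0`, and continuity of `g` at `f` yields the limit `g f`.
-/

open MeasureTheory Filter Set Topology

theorem IsCompact.exists_nonneg_lt_forall_le {α : Type*} [TopologicalSpace α] {φ : α → ℝ}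
    {K : Set α} (hK : IsCompact K) (hφ : ContinuousOn φ K) {a : ℝ} (ha : 0 < a) (hlt : ∀ x ∈ K, φ x < a) :
    ∃ m, 0 ≤ m ∧ m < a ∧ ∀ x ∈ K, φ x ≤ m := by
  rcases K.eq_empty_or_nonempty with rfl | hne
  · exact ⟨0, le_rfl, ha, by simp⟩
  obtain ⟨x₁, hx₁, hmax⟩ := hK.exists_isMaxOn hne hφ
  exact ⟨max (φ x₁) 0, le_max_right _ _, max_lt (hlt x₁ hx₁) ha,
    fun x hx => (hmax hx).trans (le_max_left _ _)⟩

section Laplace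

variable {α : Type*} [TopologicalSpace α] [MeasurableSpace α] [OpensMeasurableSpace α]
  [T2Space α] {μ : Measure α} [IsFiniteMeasure μ] {S : Set α} {φ : α → ℝ} {x₀ : α}

theorem setIntegral_pow_mono_set (hS : IsCompact S) (hφ : ContinuousOn φ S)
    (hφ0 : ∀ x ∈ S, 0 ≤ φ x) {A : Set α} (hA : A ⊆ S) (n : ℕ) :
    ∫ x in A, φ x ^ n ∂μ ≤ ∫ x in S, φ x ^ n ∂μ :=
  setIntegral_mono_set ((hφ.pow n).integrableOn_compact hS)
    ((ae_restrict_mem hS.measurableSet).mono fun x hx => pow_nonneg (hφ0 x hx) n) hA.eventuallyLE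

theorem exists_pos_mul_pow_le_setIntegral_pow (hS : IsCompact S) (hφ : ContinuousOn φ S)
    (hφ0 : ∀ x ∈ S, 0 ≤ φ x) (hx₀ : x₀ ∈ S) (hcharge : ∀ V ∈ 𝓝 x₀, 0 < μ (V ∩ S))
    {θ : ℝ} (hθ0 : 0 ≤ θ) (hθ : θ < φ x₀) :
    ∃ c > 0, ∀ n : ℕ, θ ^ n * c ≤ ∫ x in S, φ x ^ n ∂μ := by
  obtain ⟨W, hWo, hx₀W, hWθ⟩ := mem_nhdsWithin.1 ((hφ x₀ hx₀).eventually_const_lt hθ)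
  have hA : MeasurableSet (W ∩ S) := hWo.measurableSet.inter hS.measurableSet
  refine ⟨μ.real (W ∩ S), ENNReal.toReal_pos (hcharge W (hWo.mem_nhds hx₀W)).ne'
    (measure_ne_top _ _), fun n => ?_⟩
  calc θ ^ n * μ.real (W ∩ S) ≤ ∫ x in W ∩ S, φ x ^ n ∂μ :=
        setIntegral_ge_of_const_le_real hA (measure_ne_top _ _)
          (fun x hx => pow_le_pow_left₀ hθ0 (hWθ hx).le n)
          (((hφ.pow n).integrableOn_compact hS).mono_set inter_subset_right)
    _ ≤ ∫ x in S, φ x ^ n ∂μ := setIntegral_pow_mono_set hS hφ hφ0 inter_subset_right n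

theorem setIntegral_pow_pos (hS : IsCompact S) (hφ : ContinuousOn φ S)
    (hφ0 : ∀ x ∈ S, 0 ≤ φ x) (hx₀ : x₀ ∈ S) (hpos : 0 < φ x₀)
    (hcharge : ∀ V ∈ 𝓝 x₀, 0 < μ (V ∩ S)) (n : ℕ) :
    0 < ∫ x in S, φ x ^ n ∂μ := by
  obtain ⟨c, hc, hcD⟩ := exists_pos_mul_pow_le_setIntegral_pow hS hφ hφ0 hx₀ hcharge
    (half_pos hpos).le (half_lt_self hpos)
  exact (mul_pos (pow_pos (half_pos hpos) n) hc).trans_le (hcD n)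

theorem tendsto_setIntegral_pow_diff_div (hS : IsCompact S) (hφ : ContinuousOn φ S)
    (hφ0 : ∀ x ∈ S, 0 ≤ φ x) (hx₀ : x₀ ∈ S) (hpos : 0 < φ x₀)
    (hmax : ∀ x ∈ S, x ≠ x₀ → φ x < φ x₀) (hcharge : ∀ V ∈ 𝓝 x₀, 0 < μ (V ∩ S))
    {U : Set α} (hU : IsOpen U) (hx₀U : x₀ ∈ U) :
    Tendsto (fun n : ℕ => (∫ x in S \ U, φ x ^ n ∂μ) / ∫ x in S, φ x ^ n ∂μ) atTop (𝓝 0) := by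
  obtain ⟨m, hm0, hmx₀, hmK⟩ := (hS.diff hU).exists_nonneg_lt_forall_le (hφ.mono sdiff_subset)
    hpos fun x hx => hmax x hx.1 fun h => hx.2 (h ▸ hx₀U)
  obtain ⟨θ, hmθ, hθx₀⟩ := exists_between hmx₀
  have hθ : 0 < θ := hm0.trans_lt hmθ
  obtain ⟨c, hc, hcD⟩ := exists_pos_mul_pow_le_setIntegral_pow hS hφ hφ0 hx₀ hcharge hθ.le hθx₀
  have hbound : ∀ n : ℕ, (∫ x in S \ U, φ x ^ n ∂μ) / ∫ x in S, φ x ^ n ∂μ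
      ≤ μ.real univ / c * (m / θ) ^ n := by
    intro n
    have hnum : ∫ x in S \ U, φ x ^ n ∂μ ≤ m ^ n * μ.real univ := by
      calc ∫ x in S \ U, φ x ^ n ∂μ ≤ m ^ n * μ.real (S \ U) := by
            refine (Real.le_norm_self _).trans
              (norm_setIntegral_le_of_norm_le_const (measure_lt_top _ _) fun x hx => ?_)
            rw [Real.norm_of_nonneg (pow_nonneg (hφ0 x hx.1) n)]
            exact pow_le_pow_left₀ (hφ0 x hx.1) (hmK x hx) n
        _ ≤ m ^ n * μ.real univ :=
            mul_le_mul_of_nonneg_left (measureReal_mono (subset_univ _)) (by positivity)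
    calc (∫ x in S \ U, φ x ^ n ∂μ) / ∫ x in S, φ x ^ n ∂μ
        ≤ m ^ n * μ.real univ / (θ ^ n * c) :=
          div_le_div₀ (by positivity) hnum (by positivity) (hcD n)
      _ = μ.real univ / c * (m / θ) ^ n := by rw [div_pow]; ring
  have hgeom : Tendsto (fun n : ℕ => μ.real univ / c * (m / θ) ^ n) atTop (𝓝 0) := by
    simpa using (tendsto_pow_atTop_nhds_zero_of_lt_one (by positivity)
      ((div_lt_one hθ).2 hmθ)).const_mul (μ.real univ / c)
  have hnonneg (n : ℕ) : 0 ≤ (∫ x in S \ U, φ x ^ n ∂μ) / ∫ x in S, φ x ^ n ∂μ :=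
    div_nonneg (setIntegral_nonneg (hS.measurableSet.diff hU.measurableSet)
      fun x hx => pow_nonneg (hφ0 x hx.1) n) (setIntegral_pow_pos hS hφ hφ0 hx₀ hpos hcharge n).le
  exact squeeze_zero hnonneg hbound hgeom

theorem setIntegral_mul_pow_le_add (hS : IsCompact S) (hφ : ContinuousOn φ S)
    (hφ0 : ∀ x ∈ S, 0 ≤ φ x) {ψ : α → ℝ} (hψ : ContinuousOn ψ S) {U : Set α}
    (hU : MeasurableSet U) {a C : ℝ} (ha : 0 ≤ a) (hψa : ∀ x ∈ S ∩ U, ψ x ≤ a)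
    (hψC : ∀ x ∈ S, ψ x ≤ C) (n : ℕ) :
    ∫ x in S, ψ x * φ x ^ n ∂μ ≤ a * ∫ x in S, φ x ^ n ∂μ + C * ∫ x in S \ U, φ x ^ n ∂μ := by
  have hint : IntegrableOn (fun x => φ x ^ n) S μ := (hφ.pow n).integrableOn_compact hS
  have hψint : IntegrableOn (fun x => ψ x * φ x ^ n) S μ :=
    (hψ.mul (hφ.pow n)).integrableOn_compact hS
  rw [← integral_inter_add_sdiff hU hψint]
  gcongr ?_ + ?_
  · calc ∫ x in S ∩ U, ψ x * φ x ^ n ∂μ ≤ ∫ x in S ∩ U, a * φ x ^ n ∂μ :=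
          setIntegral_mono_on (hψint.mono_set inter_subset_left)
            ((hint.mono_set inter_subset_left).const_mul _) (hS.measurableSet.inter hU)
            fun x hx => mul_le_mul_of_nonneg_right (hψa x hx) (pow_nonneg (hφ0 x hx.1) n)
      _ ≤ a * ∫ x in S, φ x ^ n ∂μ := by
          rw [integral_const_mul]
          exact mul_le_mul_of_nonneg_left
            (setIntegral_pow_mono_set hS hφ hφ0 inter_subset_left n) ha
  · rw [← integral_const_mul]
    exact setIntegral_mono_on (hψint.mono_set sdiff_subset)
      ((hint.mono_set sdiff_subset).const_mul _) (hS.measurableSet.diff hU) fun x hx =>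
        mul_le_mul_of_nonneg_right (hψC x hx.1) (pow_nonneg (hφ0 x hx.1) n)

theorem tendsto_setIntegral_mul_pow_div_of_eq_zero (hS : IsCompact S) (hφ : ContinuousOn φ S)
    (hφ0 : ∀ x ∈ S, 0 ≤ φ x) (hx₀ : x₀ ∈ S) (hpos : 0 < φ x₀)
    (hmax : ∀ x ∈ S, x ≠ x₀ → φ x < φ x₀) (hcharge : ∀ V ∈ 𝓝 x₀, 0 < μ (V ∩ S))
    {ψ : α → ℝ} (hψ : ContinuousOn ψ S) (hψ0 : ∀ x ∈ S, 0 ≤ ψ x) (hψx₀ : ψ x₀ = 0) :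
    Tendsto (fun n : ℕ => (∫ x in S, ψ x * φ x ^ n ∂μ) / ∫ x in S, φ x ^ n ∂μ) atTop (𝓝 0) := by
  have hD := setIntegral_pow_pos hS hφ hφ0 hx₀ hpos hcharge (μ := μ)
  refine tendsto_order.2 ⟨fun a ha => .of_forall fun n => ha.trans_le (div_nonneg
    (setIntegral_nonneg hS.measurableSet fun x hx => mul_nonneg (hψ0 x hx)
      (pow_nonneg (hφ0 x hx) n)) (hD n).le), fun ε hε => ?_⟩
  obtain ⟨U, hUo, hx₀U, hUψ⟩ :=
    mem_nhdsWithin.1 ((hψ x₀ hx₀).eventually_lt_const (hψx₀ ▸ half_pos hε))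
  obtain ⟨C, hC⟩ := hS.exists_bound_of_continuousOn hψ
  have hmass := (tendsto_setIntegral_pow_diff_div hS hφ hφ0 hx₀ hpos hmax hcharge hUo
    hx₀U).const_mul C
  rw [mul_zero] at hmass
  filter_upwards [hmass.eventually_lt_const (half_pos hε)] with n hn
  have hsplit := setIntegral_mul_pow_le_add hS hφ hφ0 hψ hUo.measurableSet (half_pos hε).le
    (fun x hx => (hUψ ⟨hx.2, hx.1⟩).le) (fun x hx => (le_abs_self _).trans (hC x hx)) n (μ := μ)
  rw [← mul_div_assoc, div_lt_iff₀ (hD n)] at hn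
  rw [div_lt_iff₀ (hD n)]
  linarith

theorem tendsto_setIntegral_mul_pow_div (hS : IsCompact S) (hφ : ContinuousOn φ S)
    (hφ0 : ∀ x ∈ S, 0 ≤ φ x) (hx₀ : x₀ ∈ S) (hpos : 0 < φ x₀)
    (hmax : ∀ x ∈ S, x ≠ x₀ → φ x < φ x₀) (hcharge : ∀ V ∈ 𝓝 x₀, 0 < μ (V ∩ S))
    {g : α → ℝ} (hg : ContinuousOn g S) :
    Tendsto (fun n : ℕ => (∫ x in S, g x * φ x ^ n ∂μ) / ∫ x in S, φ x ^ n ∂μ) atTop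
      (𝓝 (g x₀)) := by
  have hdev := tendsto_setIntegral_mul_pow_div_of_eq_zero hS hφ hφ0 hx₀ hpos hmax hcharge
    (ψ := fun x => |g x - g x₀|) (by fun_prop) (fun x _ => abs_nonneg _) (by simp)
  refine tendsto_iff_norm_sub_tendsto_zero.2 (squeeze_zero (fun _ => norm_nonneg _)
    (fun n => ?_) hdev)
  have hD := setIntegral_pow_pos hS hφ hφ0 hx₀ hpos hcharge (μ := μ) n
  have hcenter : (∫ x in S, g x * φ x ^ n ∂μ) / (∫ x in S, φ x ^ n ∂μ) - g x₀
      = (∫ x in S, (g x - g x₀) * φ x ^ n ∂μ) / ∫ x in S, φ x ^ n ∂μ := by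
    simp_rw [sub_mul]
    have hgφ : IntegrableOn (fun x => g x * φ x ^ n) S μ :=
      (hg.mul (hφ.pow n)).integrableOn_compact hS
    have hφn : IntegrableOn (fun x => g x₀ * φ x ^ n) S μ :=
      ((hφ.pow n).integrableOn_compact hS).const_mul _
    rw [integral_sub hgφ hφn, integral_const_mul]
    field_simp
  rw [hcenter, Real.norm_eq_abs, abs_div, abs_of_pos hD]
  gcongr
  refine abs_integral_le_integral_abs.trans_eq (setIntegral_congr_fun hS.measurableSet
    fun x hx => ?_)
  rw [abs_mul, abs_of_nonneg (pow_nonneg (hφ0 x hx) n)]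

end Laplace

theorem pow_mul_one_sub_pow_lt_of_ne {r s : ℕ} (hrs : r + s ≠ 0) {x : ℝ} (hx : x ∈ Icc (0 : ℝ) 1)
    (hne : x ≠ r / (r + s)) :
    x ^ r * (1 - x) ^ s < ((r : ℝ) / (r + s)) ^ r * (1 - (r : ℝ) / (r + s)) ^ s := by
  obtain ⟨hx0, hx1⟩ := hx
  rcases Nat.eq_zero_or_pos r with rfl | hr
  · have hs : s ≠ 0 := by simpa using hrs
    simp only [CharP.cast_eq_zero, zero_div, ne_eq] at hne ⊢
    simpa using pow_lt_one₀ (by linarith) (by linarith [lt_of_le_of_ne hx0 (Ne.symm hne)]) hs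
  rcases Nat.eq_zero_or_pos s with rfl | hs
  · have hr' : (r : ℝ) ≠ 0 := by positivity
    simp only [CharP.cast_eq_zero, add_zero, div_self hr'] at hne ⊢
    simpa using pow_lt_one₀ hx0 (lt_of_le_of_ne hx1 hne) hr.ne'
  set f : ℝ := r / (r + s) with hf
  clear_value f
  have hrs' : (0 : ℝ) < r + s := by positivity
  have hf0 : 0 < f := by rw [hf]; positivity
  have hf1 : 0 < 1 - f := by
    rw [hf, sub_pos, div_lt_one hrs']; exact lt_add_of_pos_right _ (by exact_mod_cast hs)
  have hfr : f * (r + s : ℕ) = r := by push_cast; rw [hf, div_mul_cancel₀ _ hrs'.ne']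
  have hfs : (1 - f) * (r + s : ℕ) = s := by rw [sub_mul, hfr]; push_cast; ring
  -- Weighted AM-GM with weights `f, 1 - f` applied to `x / f` and `(1 - x) / (1 - f)`.
  have hamgm : (x / f) ^ f * ((1 - x) / (1 - f)) ^ (1 - f) < 1 := by
    have key := (Real.geom_mean_lt_arith_mean2_weighted_iff_of_pos (p₁ := x / f)
      (p₂ := (1 - x) / (1 - f)) hf0 hf1 (by positivity) (div_nonneg (sub_nonneg.2 hx1) hf1.le)
      (add_sub_cancel f 1)).2 ?_
    · convert key using 1
      field_simp
      ring
    · rw [Ne, div_eq_div_iff hf0.ne' hf1.ne']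
      intro h
      exact hne (by linarith)
  have hpow := pow_lt_one₀ (by positivity) hamgm hrs
  rw [mul_pow, ← Real.rpow_mul_natCast (by positivity), ← Real.rpow_mul_natCast
    (div_nonneg (sub_nonneg.2 hx1) hf1.le), hfr, hfs, Real.rpow_natCast, Real.rpow_natCast] at hpow
  calc x ^ r * (1 - x) ^ s = (x / f) ^ r * ((1 - x) / (1 - f)) ^ s * (f ^ r * (1 - f) ^ s) := by
        rw [div_pow, div_pow]; field_simp
    _ < f ^ r * (1 - f) ^ s := mul_lt_of_lt_one_left (by positivity) hpow

theorem deFinetti_stmt14_general (μ : Measure ℝ) [IsProbabilityMeasure μ]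
    (r s : ℕ) (hrs : r + s ≠ 0)
    (hcharge : ∀ ε : ℝ, 0 < ε →
      0 < μ (Set.Ioo ((r : ℝ) / (r + s) - ε) ((r : ℝ) / (r + s) + ε) ∩ Set.Icc (0:ℝ) 1))
    (g : ℝ → ℝ) (hg : ContinuousOn g (Set.Icc (0:ℝ) 1)) :
    Tendsto
      (fun n : ℕ =>
        (∫ ξ in Set.Icc (0:ℝ) 1, g ξ * ξ ^ (n * r) * (1 - ξ) ^ (n * s) ∂μ) /
          (∫ ξ in Set.Icc (0:ℝ) 1, ξ ^ (n * r) * (1 - ξ) ^ (n * s) ∂μ))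
      atTop (nhds (g ((r : ℝ) / (r + s)))) := by
  set f : ℝ := r / (r + s)
  have hf : f ∈ Icc (0 : ℝ) 1 :=
    ⟨by positivity, div_le_one_of_le₀ (le_add_of_nonneg_right s.cast_nonneg) (by positivity)⟩
  have hφ0 : ∀ x ∈ Icc (0 : ℝ) 1, 0 ≤ x ^ r * (1 - x) ^ s :=
    fun x hx => mul_nonneg (pow_nonneg hx.1 r) (pow_nonneg (sub_nonneg.2 hx.2) s)
  have hmax : ∀ x ∈ Icc (0 : ℝ) 1, x ≠ f → x ^ r * (1 - x) ^ s < f ^ r * (1 - f) ^ s :=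
    fun x hx => pow_mul_one_sub_pow_lt_of_ne hrs hx
  have hpos : 0 < f ^ r * (1 - f) ^ s := by
    obtain ⟨y, hy, hyf⟩ : ∃ y ∈ Icc (0 : ℝ) 1, y ≠ f := by
      by_cases h : f = 0
      · exact ⟨1, right_mem_Icc.2 zero_le_one, h ▸ one_ne_zero⟩
      · exact ⟨0, left_mem_Icc.2 zero_le_one, Ne.symm h⟩
    exact (hφ0 y hy).trans_lt (hmax y hy hyf)
  have hcharge' : ∀ V ∈ 𝓝 f, 0 < μ (V ∩ Icc 0 1) := by
    intro V hV
    obtain ⟨ε, hε, hball⟩ := Metric.mem_nhds_iff.1 hV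
    rw [Real.ball_eq_Ioo] at hball
    exact (hcharge ε hε).trans_le (measure_mono (inter_subset_inter_left _ hball))
  have hpow : ∀ (n : ℕ) (x : ℝ), x ^ (n * r) * (1 - x) ^ (n * s) = (x ^ r * (1 - x) ^ s) ^ n :=
    fun n x => by rw [mul_pow, ← pow_mul, ← pow_mul, mul_comm r, mul_comm s]
  simp only [mul_assoc, hpow]
  exact tendsto_setIntegral_mul_pow_div isCompact_Icc (by fun_prop) hφ0 hf hpos hmax hcharge' hg

/-- asymptotic concentration of the posterior: if `μ` is a probability measure on
`[0,1]` charging every neighborhood of `f = r/(r+s)` (with `r + s ≠ 0`), then for every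
continuous `g : [0,1] → ℝ` the posterior expectations
`(∫₀¹ g(ξ) ξ^{nr} (1-ξ)^{ns} dμ) / (∫₀¹ ξ^{nr} (1-ξ)^{ns} dμ)` converge to `g(f)`:
the normalized measures `ξ^{nr}(1-ξ)^{ns} dμ` converge weakly to the Dirac measure at `f`. -/
theorem deFinetti_stmt14 (μ : Measure ℝ) [IsProbabilityMeasure μ]
    (hsupp : μ (Set.Icc (0:ℝ) 1)ᶜ = 0) (r s : ℕ) (hrs : r + s ≠ 0)
    (hcharge : ∀ ε : ℝ, 0 < ε →
      0 < μ (Set.Ioo ((r : ℝ) / (r + s) - ε) ((r : ℝ) / (r + s) + ε) ∩ Set.Icc (0:ℝ) 1))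
    (g : ℝ → ℝ) (hg : ContinuousOn g (Set.Icc (0:ℝ) 1)) :
    Tendsto
      (fun n : ℕ =>
        (∫ ξ in Set.Icc (0:ℝ) 1, g ξ * ξ ^ (n * r) * (1 - ξ) ^ (n * s) ∂μ) /
          (∫ ξ in Set.Icc (0:ℝ) 1, ξ ^ (n * r) * (1 - ξ) ^ (n * s) ∂μ))
      atTop (nhds (g ((r : ℝ) / (r + s)))) :=
  deFinetti_stmt14_general μ r s hrs hcharge g hg
end
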